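/- arXiv:0906.4129 — 6 statements merged into one kernel-verified Lean document; each statement's English description precedes it below -/
import Mathlib

section
/- Suppose S is a biorder decomposed as a disjoint union S = S₁ ⊔ S₂ such that s ≫ t for all s ∈ S₁ and t ∈ S₂ (so S₁ and S₂ are biorders with the restricted structure). For a configuration a for S write a₁ = a|_{S₁} and a₂ = a|_{S₂}. Then for each h ∈ {i, j}: if φ_h(a₁) ≥ ε_h(a₂), then ẽ_h a = 0 if and only if ẽ_h a₁ = 0, and when ẽ_h a ≠ 0 one has (ẽ_h a)|_{S₁} = ẽ_h a₁ and (ẽ_h a)|_{S₂} = a₂; if φ_h(a₁) < ε_h(a₂), then ẽ_h a ≠ 0 with (ẽ_h a)|_{S₁} = a₁ and (ẽ_h a)|_{S₂} = ẽ_h a₂. Similarly, if φ_h(a₁) > ε_h(a₂), then f̃_h a ≠ 0 with (f̃_h a)|_{S₁} = f̃_h a₁ and (f̃_h a)|_{S₂} = a₂; if φ_h(a₁) ≤ ε_h(a₂), then f̃_h a = 0 if and only if f̃_h a₂ = 0, and when f̃_h a ≠ 0 one has (f̃_h a)|_{S₁} = a₁ and (f̃_h a)|_{S₂} = f̃_h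 a₂. Moreover, if a is a good configuration for S, then a₁ and a₂ are good configurations for S₁ and S₂ respectively. -/
/-!  Biorders and configurations (Section 4 of the paper).

A biorder is a finite set `S` with two linear orders `>_i`, `>_j` and a labelling
`Γ : S → {i, j}` (here modelled by `Bool`, with `true` standing for the label `i` and
`false` for the label `j`), such that `s >_i t` and `t >_j s` force `Γ s = j` and `Γ t = i`.

A configuration is a function `a : S → ℕ` taking values in `{0, 1, 2}`.

All signature-related notions are defined relative to a finite subset `T ⊆ S`
(the biorder restricted to `T`); the notions for the biorder `S` itself are recovered
by taking `T = Finset.univ`. -/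

attribute [local instance] Classical.propDecidable

namespace BiorderCrystal

structure Biorder (S : Type) where
  /-- the linear order whose strict relation is `<_i` -/
  li : LinearOrder S
  /-- the linear order whose strict relation is `<_j` -/
  lj : LinearOrder S
  /-- the labelling `Γ : S → {i, j}`; `true` means label `i`, `false` means label `j` -/
  lab : S → Bool
  /-- if `s >_i t` and `t >_j s` then `Γ s = j` and `Γ t = i` -/
  compat : ∀ s t : S, li.lt t s → lj.lt s t → lab s = false ∧ lab t = true

variable {S : Type}

/-- `s <_i t`. -/
def Biorder.lti (B : Biorder S) (s t : S) : Prop := B.li.lt s t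

/-- `s <_j t`. -/
def Biorder.ltj (B : Biorder S) (s t : S) : Prop := B.lj.lt s t

/-- The order used for the `h`-signature: `>_i` if `h = true`, `>_j` if `h = false`. -/
def Biorder.ord (B : Biorder S) (h : Bool) : LinearOrder S := if h then B.li else B.lj

/-- `s ≫ t`, i.e. `s >_i t` and `s >_j t`. -/
def Biorder.gg (B : Biorder S) (s t : S) : Prop := B.lti t s ∧ B.ltj t s

/-- `s ⋗ t`, i.e. `s >_i t` or `s >_j t`. -/
def Biorder.gd (B : Biorder S) (s t : S) : Prop := B.lti t s ∨ B.ltj t s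

/-- `▷`, the transitive closure of `⋗`, computed within the subset `T`. -/
def Biorder.triOn (B : Biorder S) (T : Finset S) : S → S → Prop :=
  Relation.TransGen (fun s t => s ∈ T ∧ t ∈ T ∧ B.gd s t)

/-- The sign `π_h(a, s) ∈ {+1, 0, -1}` contributed by `s` to the `h`-signature of `a`. -/
def sgn (B : Biorder S) (h : Bool) (a : S → ℕ) (s : S) : ℤ :=
  if (a s = 0 ∧ B.lab s = h) ∨ (a s = 1 ∧ B.lab s ≠ h) then 1
  else if (a s = 1 ∧ B.lab s = h) ∨ (a s = 2 ∧ B.lab s ≠ h) then -1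
  else 0

variable [Fintype S]

/-- Minus the partial sum of the `h`-signature of `a` (over `T`) along the positions
up to and including that of `s`: the elements of `T` which are `≥ s` in the order `ord h`. -/
noncomputable def G (B : Biorder S) (h : Bool) (T : Finset S) (a : S → ℕ) (s : S) : ℤ :=
  -(∑ t ∈ T.filter (fun t => (B.ord h).le s t), sgn B h a t)

/-- The sum of the `h`-signature of `a` (over `T`) from the position of `s` onwards:
the elements of `T` which are `≤ s` in the order `ord h`. -/
noncomputable def H (B : Biorder S) (h : Bool) (T : Finset S) (a : S → ℕ) (s : S) : ℤ :=
  ∑ t ∈ T.filter (fun t => (B.ord h).le t s), sgn B h a t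

/-- `ε_h(a)` (over `T`): the maximum of `0` and all the partial sums `G`. -/
noncomputable def epsB (B : Biorder S) (h : Bool) (T : Finset S) (a : S → ℕ) : ℤ :=
  T.fold max 0 (G B h T a)

/-- `φ_h(a)` (over `T`): the maximum of `0` and all the partial sums `H`. -/
noncomputable def phiB (B : Biorder S) (h : Bool) (T : Finset S) (a : S → ℕ) : ℤ :=
  T.fold max 0 (H B h T a)

/-- The `h`-good element of `T` for `a`:  the element in the good position of the
`h`-signature, i.e. the `ord h`-greatest element achieving `G = ε_h > 0` (or `none`). -/
noncomputable def goodElt (B : Biorder S) (h : Bool) (T : Finset S) (a : S → ℕ) : Option S :=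
  if hne : (T.filter fun s => 0 < epsB B h T a ∧ G B h T a s = epsB B h T a).Nonempty
  then some (@Finset.max' S (B.ord h) _ hne)
  else none

/-- The `h`-cogood element of `T` for `a`: the element in the cogood position of the
`h`-signature, i.e. the `ord h`-least element achieving `H = φ_h > 0` (or `none`). -/
noncomputable def cogoodElt (B : Biorder S) (h : Bool) (T : Finset S) (a : S → ℕ) : Option S :=
  if hne : (T.filter fun s => 0 < phiB B h T a ∧ H B h T a s = phiB B h T a).Nonempty
  then some (@Finset.min' S (B.ord h) _ hne)
  else none

/-- The crystal operator `ẽ_h` (over `T`): decrease `a` by one at the `h`-good element,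
or `none` (the ghost element `0`) if there is no good position. -/
noncomputable def et (B : Biorder S) (h : Bool) (T : Finset S) (a : S → ℕ) :
    Option (S → ℕ) :=
  (goodElt B h T a).map fun s => Function.update a s (a s - 1)

/-- The crystal operator `f̃_h` (over `T`): increase `a` by one at the `h`-cogood element,
or `none` (the ghost element `0`) if there is no cogood position. -/
noncomputable def ft (B : Biorder S) (h : Bool) (T : Finset S) (a : S → ℕ) :
    Option (S → ℕ) :=
  (cogoodElt B h T a).map fun s => Function.update a s (a s + 1)

/-- `a` is a good configuration for the biorder restricted to `T`:
axioms G1, G2, G3 of the paper. -/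
def IsGoodOn (B : Biorder S) (T : Finset S) (a : S → ℕ) : Prop :=
  (¬ ∃ s ∈ T, ∃ t ∈ T, B.lti t s ∧ B.ltj s t ∧ a s = 1 ∧ a t = 1) ∧
  (¬ ∃ s ∈ T, ∃ t ∈ T, B.gd s t ∧ B.triOn T t s ∧ B.lab s = B.lab t ∧ a s < a t) ∧
  (¬ ∃ q ∈ T, ∃ r ∈ T, ∃ s ∈ T, ∃ t ∈ T,
      B.gd q r ∧ B.gg r s ∧ B.gd s t ∧ B.gg r t ∧ B.gd t q ∧ B.gg q s ∧
      a q = 2 ∧ a s = 2 ∧ a r = 0 ∧ a t = 0)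

end BiorderCrystal

/-!
Along the order used for the `h`-signature every element of `T` lies above every element
of `Tᶜ`, so the `h`-signature of `a` is the signature of `a₁` followed by that of `a₂`.
The partial sums of a concatenation are those of the first factor, or those of the second
shifted by the total of the first; since `φ − ε` is the total of a signature, this gives
`ε(a) = max (ε(a₁), ε(a₂) − φ(a₁) + ε(a₁))` and the dual formula for `φ`. The (co)good
position of `a` is then the one of `a₁` or of `a₂`, according to which term of the maximum
wins; ties go to `a₁` for `ẽ` and to `a₂` for `f̃`, because the good position is the
highest maximizer and the cogood position the lowest.
Goodness passes to restrictions since `▷` computed inside `T` is contained in `▷` on `S`.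
-/

namespace Finset

theorem exists_eq_fold_max_of_lt {α β : Type*} [LinearOrder β] {s : Finset α} {f : α → β}
    {b : β} (hb : b < s.fold max b f) : ∃ x ∈ s, f x = s.fold max b f := by
  obtain hle | ⟨x, hx, hfx⟩ := (le_fold_max (s.fold max b f)).1 le_rfl
  · exact absurd hle hb.not_ge
  · exact ⟨x, hx, le_antisymm (((fold_max_le _).1 le_rfl).2 x hx) hfx⟩

variable {α : Type*} [LinearOrder α] {A : Finset α} {p : α → Prop} [DecidablePred p]

theorem max'_filter_eq_max' (hp : ∀ x ∈ A, ¬ p x → ∀ y ∈ A, p y → x < y)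
    (hne : (A.filter p).Nonempty) :
    (A.filter p).max' hne = A.max' (hne.mono (filter_subset p A)) := by
  refine le_antisymm (max'_subset _ (filter_subset p A)) ?_
  have hA := hne.mono (filter_subset p A)
  by_cases hmax : p (A.max' hA)
  · exact le_max' _ _ (mem_filter.2 ⟨A.max'_mem hA, hmax⟩)
  · obtain ⟨y, hy⟩ := hne
    rw [mem_filter] at hy
    exact absurd (A.le_max' y hy.1) (hp _ (A.max'_mem hA) hmax y hy.1 hy.2).not_ge

theorem min'_filter_eq_min' (hp : ∀ x ∈ A, ¬ p x → ∀ y ∈ A, p y → y < x)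
    (hne : (A.filter p).Nonempty) :
    (A.filter p).min' hne = A.min' (hne.mono (filter_subset p A)) := by
  refine le_antisymm ?_ (min'_subset _ (filter_subset p A))
  have hA := hne.mono (filter_subset p A)
  by_cases hmin : p (A.min' hA)
  · exact min'_le _ _ (mem_filter.2 ⟨A.min'_mem hA, hmin⟩)
  · obtain ⟨y, hy⟩ := hne
    rw [mem_filter] at hy
    exact absurd (A.min'_le y hy.1) (hp _ (A.min'_mem hA) hmin y hy.1 hy.2).not_ge

end Finset

namespace BiorderCrystal

section SignatureSums

variable {α : Type*} [LinearOrder α] (f : α → ℤ)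

-- For `U = {s₁ < ⋯ < sₘ}` the list `0, P(s₁), …, P(sₘ)` of prefix sums is the list
-- `P'(s₁), …, P'(sₘ)` of strict prefix sums followed by the total.
theorem prefix_sums_le_iff (U : Finset α) (c : ℤ) :
    (0 ≤ c ∧ ∀ s ∈ U, ∑ t ∈ U with t ≤ s, f t ≤ c) ↔
      (∑ t ∈ U, f t ≤ c ∧ ∀ s ∈ U, ∑ t ∈ U with t < s, f t ≤ c) := by
  induction U using Finset.induction_on_max with
  | empty => simp
  | insert m U hm ih =>
    have hmU : m ∉ U := fun h => lt_irrefl m (hm m h)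
    have hle : (∀ s ∈ U, ∑ t ∈ insert m U with t ≤ s, f t ≤ c) ↔
        ∀ s ∈ U, ∑ t ∈ U with t ≤ s, f t ≤ c :=
      forall₂_congr fun s hs => by rw [Finset.filter_insert, if_neg (hm s hs).not_ge]
    have hlt : (∀ s ∈ U, ∑ t ∈ insert m U with t < s, f t ≤ c) ↔
        ∀ s ∈ U, ∑ t ∈ U with t < s, f t ≤ c :=
      forall₂_congr fun s hs => by rw [Finset.filter_insert, if_neg (hm s hs).not_gt]
    have hm_le : ∑ t ∈ insert m U with t ≤ m, f t = ∑ t ∈ insert m U, f t := by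
      refine congrArg (Finset.sum · f) (Finset.filter_true_of_mem fun t ht => ?_)
      rcases Finset.mem_insert.1 ht with rfl | ht
      exacts [le_rfl, (hm t ht).le]
    have hm_lt : ∑ t ∈ insert m U with t < m, f t = ∑ t ∈ U, f t := by
      rw [Finset.filter_insert, if_neg (lt_irrefl m), Finset.filter_true_of_mem hm]
    rw [Finset.forall_mem_insert, Finset.forall_mem_insert, hm_le, hm_lt, hle, hlt,
      Finset.sum_insert hmU]
    constructor
    · rintro ⟨h0, htop, hrest⟩
      exact ⟨htop, ih.1 ⟨h0, hrest⟩⟩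
    · rintro ⟨htop, hrest⟩
      exact ⟨(ih.2 hrest).1, htop, (ih.2 hrest).2⟩

theorem fold_max_prefix_sum_eq (U : Finset α) :
    U.fold max 0 (fun s => ∑ t ∈ U with t ≤ s, f t) =
      U.fold max 0 (fun s => -∑ t ∈ U with s ≤ t, f t) + ∑ t ∈ U, f t := by
  refine eq_of_forall_ge_iff fun c => ?_
  rw [Finset.fold_max_le, prefix_sums_le_iff, ← le_sub_iff_add_le, Finset.fold_max_le]
  refine and_congr sub_nonneg.symm (forall₂_congr fun s _ => ?_)
  have hsplit := Finset.sum_filter_add_sum_filter_not U (· < s) f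
  simp only [not_lt] at hsplit
  constructor <;> intro <;> linarith

end SignatureSums

section Biorder

variable {S : Type}

theorem Biorder.ord_lt_of_gg (B : Biorder S) (h : Bool) {s t : S} (hst : B.gg s t) :
    (B.ord h).lt t s := by
  cases h
  exacts [hst.2, hst.1]

theorem Biorder.triOn_mono (B : Biorder S) {U V : Finset S} (hUV : U ⊆ V) {s t : S}
    (hst : B.triOn U s t) : B.triOn V s t :=
  Relation.TransGen.mono (fun _ _ ⟨hx, hy, hxy⟩ => ⟨hUV hx, hUV hy, hxy⟩) _ _ hst

theorem IsGoodOn.anti {B : Biorder S} {U V : Finset S} {a : S → ℕ} (hV : IsGoodOn B V a)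
    (hUV : U ⊆ V) : IsGoodOn B U a := by
  obtain ⟨g1, g2, g3⟩ := hV
  refine ⟨fun ⟨s, hs, t, ht, rest⟩ => g1 ⟨s, hUV hs, t, hUV ht, rest⟩,
    fun ⟨s, hs, t, ht, hgd, htri, rest⟩ =>
      g2 ⟨s, hUV hs, t, hUV ht, hgd, B.triOn_mono hUV htri, rest⟩,
    fun ⟨q, hq, r, hr, s, hs, t, ht, rest⟩ =>
      g3 ⟨q, hUV hq, r, hUV hr, s, hUV hs, t, hUV ht, rest⟩⟩

end Biorder

section EpsPhi

variable {S : Type} (B : Biorder S) (h : Bool) (T : Finset S) (a : S → ℕ)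

theorem phiB_eq_epsB_add_sum : phiB B h T a = epsB B h T a + ∑ t ∈ T, sgn B h a t :=
  letI := B.ord h
  fold_max_prefix_sum_eq (sgn B h a) T

theorem epsB_nonneg : 0 ≤ epsB B h T a := (Finset.le_fold_max 0).2 (Or.inl le_rfl)

theorem phiB_nonneg : 0 ≤ phiB B h T a := (Finset.le_fold_max 0).2 (Or.inl le_rfl)

variable {B h T a}

theorem epsB_le_iff {c : ℤ} : epsB B h T a ≤ c ↔ 0 ≤ c ∧ ∀ s ∈ T, G B h T a s ≤ c :=
  Finset.fold_max_le c

theorem phiB_le_iff {c : ℤ} : phiB B h T a ≤ c ↔ 0 ≤ c ∧ ∀ s ∈ T, H B h T a s ≤ c :=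
  Finset.fold_max_le c

theorem G_le_epsB {s : S} (hs : s ∈ T) : G B h T a s ≤ epsB B h T a :=
  (Finset.le_fold_max _).2 (Or.inr ⟨s, hs, le_rfl⟩)

theorem H_le_phiB {s : S} (hs : s ∈ T) : H B h T a s ≤ phiB B h T a :=
  (Finset.le_fold_max _).2 (Or.inr ⟨s, hs, le_rfl⟩)

theorem exists_G_eq_epsB (hpos : 0 < epsB B h T a) : ∃ s ∈ T, G B h T a s = epsB B h T a :=
  Finset.exists_eq_fold_max_of_lt hpos

theorem exists_H_eq_phiB (hpos : 0 < phiB B h T a) : ∃ s ∈ T, H B h T a s = phiB B h T a :=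
  Finset.exists_eq_fold_max_of_lt hpos

theorem et_ne_none (hpos : 0 < epsB B h T a) : et B h T a ≠ none := by
  obtain ⟨s, hs, hG⟩ := exists_G_eq_epsB hpos
  rw [et, goodElt, dif_pos ⟨s, Finset.mem_filter.2 ⟨hs, hpos, hG⟩⟩]
  exact Option.some_ne_none _

theorem ft_ne_none (hpos : 0 < phiB B h T a) : ft B h T a ≠ none := by
  obtain ⟨s, hs, hH⟩ := exists_H_eq_phiB hpos
  rw [ft, cogoodElt, dif_pos ⟨s, Finset.mem_filter.2 ⟨hs, hpos, hH⟩⟩]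
  exact Option.some_ne_none _

end EpsPhi

section Concatenation

variable {S : Type} [Fintype S] {B : Biorder S} {h : Bool} {a : S → ℕ} {T : Finset S}

theorem sum_filter_univ_eq (p : S → Prop) (g : S → ℤ) :
    ∑ t with p t, g t = ∑ t ∈ T with p t, g t + ∑ t ∈ Tᶜ with p t, g t := by
  simp only [Finset.sum_filter]
  exact (Finset.sum_add_sum_compl T _).symm

theorem G_univ_of_mem (hT : ∀ s ∈ T, ∀ t ∉ T, (B.ord h).lt t s) {s : S} (hs : s ∈ T) :
    G B h Finset.univ a s = G B h T a s := by
  let _ := B.ord h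
  have hout : Tᶜ.filter (s ≤ ·) = ∅ :=
    Finset.filter_eq_empty_iff.2 fun t ht => (hT s hs t (Finset.mem_compl.1 ht)).not_ge
  rw [G, G, sum_filter_univ_eq (T := T), hout, Finset.sum_empty, add_zero]

theorem G_univ_of_notMem (hT : ∀ s ∈ T, ∀ t ∉ T, (B.ord h).lt t s) {s : S} (hs : s ∉ T) :
    G B h Finset.univ a s = G B h Tᶜ a s - ∑ t ∈ T, sgn B h a t := by
  let _ := B.ord h
  have hin : T.filter (s ≤ ·) = T := Finset.filter_true_of_mem fun t ht => (hT t ht s hs).le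
  rw [G, G, sum_filter_univ_eq (T := T), hin]
  ring

theorem H_univ_of_mem (hT : ∀ s ∈ T, ∀ t ∉ T, (B.ord h).lt t s) {s : S} (hs : s ∈ T) :
    H B h Finset.univ a s = H B h T a s + ∑ t ∈ Tᶜ, sgn B h a t := by
  let _ := B.ord h
  have hin : Tᶜ.filter (· ≤ s) = Tᶜ :=
    Finset.filter_true_of_mem fun t ht => (hT s hs t (Finset.mem_compl.1 ht)).le
  rw [H, H, sum_filter_univ_eq (T := T), hin]

theorem H_univ_of_notMem (hT : ∀ s ∈ T, ∀ t ∉ T, (B.ord h).lt t s) {s : S} (hs : s ∉ T) :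
    H B h Finset.univ a s = H B h Tᶜ a s := by
  let _ := B.ord h
  have hout : T.filter (· ≤ s) = ∅ :=
    Finset.filter_eq_empty_iff.2 fun t ht => (hT t ht s hs).not_ge
  rw [H, H, sum_filter_univ_eq (T := T), hout, Finset.sum_empty, zero_add]

theorem epsB_univ (hT : ∀ s ∈ T, ∀ t ∉ T, (B.ord h).lt t s) :
    epsB B h Finset.univ a = max (epsB B h T a) (epsB B h Tᶜ a - ∑ t ∈ T, sgn B h a t) := by
  refine eq_of_forall_ge_iff fun c => ?_
  have hsum := phiB_eq_epsB_add_sum B h T a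
  rw [max_le_iff, sub_le_iff_le_add, epsB_le_iff, epsB_le_iff, epsB_le_iff]
  constructor
  · rintro ⟨h0, hG⟩
    have hGT : ∀ s ∈ T, G B h T a s ≤ c :=
      fun s hs => G_univ_of_mem hT hs ▸ hG s (Finset.mem_univ s)
    have hGC : ∀ s ∈ Tᶜ, G B h Tᶜ a s ≤ c + ∑ t ∈ T, sgn B h a t := fun s hs =>
      sub_le_iff_le_add.1 (G_univ_of_notMem hT (Finset.mem_compl.1 hs) ▸ hG s (Finset.mem_univ s))
    have hεT : epsB B h T a ≤ c := epsB_le_iff.2 ⟨h0, hGT⟩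
    exact ⟨⟨h0, hGT⟩, ⟨by linarith [phiB_nonneg B h T a], hGC⟩⟩
  · rintro ⟨⟨h0, hGT⟩, -, hGC⟩
    refine ⟨h0, fun s _ => ?_⟩
    by_cases hs : s ∈ T
    · rw [G_univ_of_mem hT hs]
      exact hGT s hs
    · rw [G_univ_of_notMem hT hs, sub_le_iff_le_add]
      exact hGC s (Finset.mem_compl.2 hs)

theorem phiB_univ (hT : ∀ s ∈ T, ∀ t ∉ T, (B.ord h).lt t s) :
    phiB B h Finset.univ a = max (phiB B h Tᶜ a) (phiB B h T a + ∑ t ∈ Tᶜ, sgn B h a t) := by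
  refine eq_of_forall_ge_iff fun c => ?_
  have hsum := phiB_eq_epsB_add_sum B h Tᶜ a
  rw [max_le_iff, ← le_sub_iff_add_le, phiB_le_iff, phiB_le_iff, phiB_le_iff]
  constructor
  · rintro ⟨h0, hH⟩
    have hHC : ∀ s ∈ Tᶜ, H B h Tᶜ a s ≤ c :=
      fun s hs => H_univ_of_notMem hT (Finset.mem_compl.1 hs) ▸ hH s (Finset.mem_univ s)
    have hHT : ∀ s ∈ T, H B h T a s ≤ c - ∑ t ∈ Tᶜ, sgn B h a t := fun s hs =>
      le_sub_iff_add_le.2 (H_univ_of_mem hT hs ▸ hH s (Finset.mem_univ s))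
    have hφC : phiB B h Tᶜ a ≤ c := phiB_le_iff.2 ⟨h0, hHC⟩
    exact ⟨⟨h0, hHC⟩, ⟨by linarith [epsB_nonneg B h Tᶜ a], hHT⟩⟩
  · rintro ⟨⟨h0, hHC⟩, -, hHT⟩
    refine ⟨h0, fun s _ => ?_⟩
    by_cases hs : s ∈ T
    · rw [H_univ_of_mem hT hs, ← le_sub_iff_add_le]
      exact hHT s hs
    · rw [H_univ_of_notMem hT hs]
      exact hHC s (Finset.mem_compl.2 hs)

theorem goodElt_univ_of_le (hT : ∀ s ∈ T, ∀ t ∉ T, (B.ord h).lt t s)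
    (hle : epsB B h Tᶜ a ≤ phiB B h T a) : goodElt B h Finset.univ a = goodElt B h T a := by
  let _ := B.ord h
  have heps : epsB B h Finset.univ a = epsB B h T a :=
    (epsB_univ hT).trans (max_eq_left (by linarith [phiB_eq_epsB_add_sum B h T a]))
  set good := Finset.univ.filter fun s =>
    0 < epsB B h Finset.univ a ∧ G B h Finset.univ a s = epsB B h Finset.univ a
  have hgoodT : good.filter (· ∈ T) =
      T.filter fun s => 0 < epsB B h T a ∧ G B h T a s = epsB B h T a := by
    ext s
    simp only [good, Finset.mem_filter, Finset.mem_univ, true_and, heps]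
    constructor
    · rintro ⟨⟨hpos, hG⟩, hs⟩
      exact ⟨hs, hpos, G_univ_of_mem hT hs ▸ hG⟩
    · rintro ⟨hs, hpos, hG⟩
      exact ⟨⟨hpos, (G_univ_of_mem hT hs).trans hG⟩, hs⟩
  rw [goodElt, goodElt, ← hgoodT]
  by_cases hne : good.Nonempty
  · have hpos : 0 < epsB B h T a := by
      obtain ⟨x, hx⟩ := hne
      exact heps ▸ (Finset.mem_filter.1 hx).2.1
    obtain ⟨s, hs, hG⟩ := exists_G_eq_epsB hpos
    have hneT : (good.filter (· ∈ T)).Nonempty :=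
      ⟨s, hgoodT ▸ Finset.mem_filter.2 ⟨hs, hpos, hG⟩⟩
    rw [dif_pos hne, dif_pos hneT,
      Finset.max'_filter_eq_max' (fun x _ hx y _ hy => hT y hy x hx)]
  · rw [dif_neg hne, dif_neg fun hneT => hne (hneT.mono (Finset.filter_subset _ _))]

theorem goodElt_univ_of_lt (hT : ∀ s ∈ T, ∀ t ∉ T, (B.ord h).lt t s)
    (hlt : phiB B h T a < epsB B h Tᶜ a) : goodElt B h Finset.univ a = goodElt B h Tᶜ a := by
  have hsum := phiB_eq_epsB_add_sum B h T a
  have heps : epsB B h Finset.univ a = epsB B h Tᶜ a - ∑ t ∈ T, sgn B h a t :=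
    (epsB_univ hT).trans (max_eq_right (by linarith))
  have hpos : 0 < epsB B h Tᶜ a := (phiB_nonneg B h T a).trans_lt hlt
  have hgood : (Finset.univ.filter fun s =>
        0 < epsB B h Finset.univ a ∧ G B h Finset.univ a s = epsB B h Finset.univ a) =
      Tᶜ.filter fun s => 0 < epsB B h Tᶜ a ∧ G B h Tᶜ a s = epsB B h Tᶜ a := by
    ext s
    simp only [Finset.mem_filter, Finset.mem_univ, true_and, Finset.mem_compl, heps]
    by_cases hs : s ∈ T
    · have : G B h T a s ≤ epsB B h T a := G_le_epsB hs
      simp only [hs, not_true_eq_false, false_and, iff_false, G_univ_of_mem hT hs]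
      rintro ⟨-, hG⟩
      linarith
    · rw [G_univ_of_notMem hT hs, sub_left_inj]
      simp only [hs, not_false_eq_true, true_and]
      exact and_congr_left fun _ => iff_of_true (by linarith [epsB_nonneg B h T a]) hpos
  rw [goodElt, goodElt, hgood]

theorem cogoodElt_univ_of_lt (hT : ∀ s ∈ T, ∀ t ∉ T, (B.ord h).lt t s)
    (hlt : epsB B h Tᶜ a < phiB B h T a) : cogoodElt B h Finset.univ a = cogoodElt B h T a := by
  have hsum := phiB_eq_epsB_add_sum B h Tᶜ a
  have hphi : phiB B h Finset.univ a = phiB B h T a + ∑ t ∈ Tᶜ, sgn B h a t :=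
    (phiB_univ hT).trans (max_eq_right (by linarith))
  have hpos : 0 < phiB B h T a := (epsB_nonneg B h Tᶜ a).trans_lt hlt
  have hcogood : (Finset.univ.filter fun s =>
        0 < phiB B h Finset.univ a ∧ H B h Finset.univ a s = phiB B h Finset.univ a) =
      T.filter fun s => 0 < phiB B h T a ∧ H B h T a s = phiB B h T a := by
    ext s
    simp only [Finset.mem_filter, Finset.mem_univ, true_and, hphi]
    by_cases hs : s ∈ T
    · rw [H_univ_of_mem hT hs, add_left_inj]
      simp only [hs, true_and]
      exact and_congr_left fun _ => iff_of_true (by linarith [phiB_nonneg B h Tᶜ a]) hpos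
    · have : H B h Tᶜ a s ≤ phiB B h Tᶜ a := H_le_phiB (Finset.mem_compl.2 hs)
      simp only [hs, false_and, iff_false, H_univ_of_notMem hT hs]
      rintro ⟨-, hH⟩
      linarith
  rw [cogoodElt, cogoodElt, hcogood]

theorem cogoodElt_univ_of_le (hT : ∀ s ∈ T, ∀ t ∉ T, (B.ord h).lt t s)
    (hle : phiB B h T a ≤ epsB B h Tᶜ a) : cogoodElt B h Finset.univ a = cogoodElt B h Tᶜ a := by
  let _ := B.ord h
  have hphi : phiB B h Finset.univ a = phiB B h Tᶜ a :=
    (phiB_univ hT).trans (max_eq_left (by linarith [phiB_eq_epsB_add_sum B h Tᶜ a]))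
  set cogood := Finset.univ.filter fun s =>
    0 < phiB B h Finset.univ a ∧ H B h Finset.univ a s = phiB B h Finset.univ a
  have hcogoodC : cogood.filter (· ∈ Tᶜ) =
      Tᶜ.filter fun s => 0 < phiB B h Tᶜ a ∧ H B h Tᶜ a s = phiB B h Tᶜ a := by
    ext s
    simp only [cogood, Finset.mem_filter, Finset.mem_univ, true_and, hphi]
    constructor
    · rintro ⟨⟨hpos, hH⟩, hs⟩
      exact ⟨hs, hpos, H_univ_of_notMem hT (Finset.mem_compl.1 hs) ▸ hH⟩
    · rintro ⟨hs, hpos, hH⟩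
      exact ⟨⟨hpos, (H_univ_of_notMem hT (Finset.mem_compl.1 hs)).trans hH⟩, hs⟩
  rw [cogoodElt, cogoodElt, ← hcogoodC]
  by_cases hne : cogood.Nonempty
  · have hpos : 0 < phiB B h Tᶜ a := by
      obtain ⟨x, hx⟩ := hne
      exact hphi ▸ (Finset.mem_filter.1 hx).2.1
    obtain ⟨s, hs, hH⟩ := exists_H_eq_phiB hpos
    have hneC : (cogood.filter (· ∈ Tᶜ)).Nonempty :=
      ⟨s, hcogoodC ▸ Finset.mem_filter.2 ⟨hs, hpos, hH⟩⟩
    rw [dif_pos hne, dif_pos hneC, Finset.min'_filter_eq_min' fun x _ hx y _ hy =>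
      hT x (by simpa using hx) y (Finset.mem_compl.1 hy)]
  · rw [dif_neg hne, dif_neg fun hneC => hne (hneC.mono (Finset.filter_subset _ _))]

end Concatenation

theorem biorder_tensor_decomposition_general (S : Type) [Fintype S] (B : Biorder S)
    (T : Finset S) (hdec : ∀ s ∈ T, ∀ t ∉ T, B.gg s t)
    (a : S → ℕ) (h : Bool) :
    (epsB B h Tᶜ a ≤ phiB B h T a →
      et B h Finset.univ a = et B h T a) ∧
    (phiB B h T a < epsB B h Tᶜ a →
      et B h Finset.univ a = et B h Tᶜ a ∧ et B h Tᶜ a ≠ none) ∧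
    (epsB B h Tᶜ a < phiB B h T a →
      ft B h Finset.univ a = ft B h T a ∧ ft B h T a ≠ none) ∧
    (phiB B h T a ≤ epsB B h Tᶜ a →
      ft B h Finset.univ a = ft B h Tᶜ a) ∧
    (IsGoodOn B Finset.univ a → IsGoodOn B T a ∧ IsGoodOn B Tᶜ a) := by
  have hT : ∀ s ∈ T, ∀ t ∉ T, (B.ord h).lt t s :=
    fun s hs t ht => B.ord_lt_of_gg h (hdec s hs t ht)
  refine ⟨fun hle => ?_, fun hlt => ⟨?_, ?_⟩, fun hlt => ⟨?_, ?_⟩, fun hle => ?_,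
    fun hgood => ⟨hgood.anti (Finset.subset_univ T), hgood.anti (Finset.subset_univ Tᶜ)⟩⟩
  · rw [et, et, goodElt_univ_of_le hT hle]
  · rw [et, et, goodElt_univ_of_lt hT hlt]
  · exact et_ne_none ((phiB_nonneg B h T a).trans_lt hlt)
  · rw [ft, ft, cogoodElt_univ_of_lt hT hlt]
  · exact ft_ne_none ((epsB_nonneg B h Tᶜ a).trans_lt hlt)
  · rw [ft, ft, cogoodElt_univ_of_le hT hle]

/-- Proposition 4.13 of the paper: if `S = S₁ ⊔ S₂` with `s ≫ t` for all `s ∈ S₁`,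
`t ∈ S₂`, then `C(S) ≅ C(S₁) ⊗ C(S₂)` as crystals (expressed here via the tensor-product
rule for the crystal operators, where the operators relative to `T` and to `Tᶜ` play the
roles of the operators on the restrictions `a₁`, `a₂`), and restrictions of good
configurations are good. -/
theorem biorder_tensor_decomposition (S : Type) [Fintype S] (B : Biorder S)
    (T : Finset S) (hdec : ∀ s ∈ T, ∀ t ∉ T, B.gg s t)
    (a : S → ℕ) (ha : ∀ s, a s ≤ 2) (h : Bool) :
    (epsB B h Tᶜ a ≤ phiB B h T a →
      et B h Finset.univ a = et B h T a) ∧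
    (phiB B h T a < epsB B h Tᶜ a →
      et B h Finset.univ a = et B h Tᶜ a ∧ et B h Tᶜ a ≠ none) ∧
    (epsB B h Tᶜ a < phiB B h T a →
      ft B h Finset.univ a = ft B h T a ∧ ft B h T a ≠ none) ∧
    (phiB B h T a ≤ epsB B h Tᶜ a →
      ft B h Finset.univ a = ft B h Tᶜ a) ∧
    (IsGoodOn B Finset.univ a → IsGoodOn B T a ∧ IsGoodOn B Tᶜ a) :=
  biorder_tensor_decomposition_general S B T hdec a h

end BiorderCrystal
end

section
/- Suppose n ≥ 3, A is an arm sequence, λ and μ are A-regular partitions, and i ∈ ℤ/nℤ. Then ẽ_i λ = μ if and only if f̃_i μ = λ. -/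
/-!  Partitions, arm sequences and the crystal operators `ẽ_i`, `f̃_i` of the paper
"Partition models for the crystal of the basic `U_q(ŝl_n)`-module".

A partition is modelled as a function `l : ℕ → ℕ` listing the parts, with rows indexed
from `0`; the Young diagram consists of the nodes `(a, c)` (row `a`, column `c`, both
`0`-indexed) with `c < l a`.  The node `(a, c)` here corresponds to the node
`(a + 1, c + 1)` in the (1-indexed) conventions of the paper; in particular its residue
is `c - a (mod n)`, its arm length is `l a - c - 1`, and its hook length is
`l a - c + l' c - a - 1`, where `l'` is the conjugate partition. -/

attribute [local instance] Classical.propDecidable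

namespace ArmCrystal

/-- `l` is a partition: weakly decreasing with some part equal to `0`. -/
def IsPartition (l : ℕ → ℕ) : Prop := (∀ a, l (a + 1) ≤ l a) ∧ ∃ N, l N = 0

/-- The conjugate partition: `conj l c` is the number of rows `a` with `l a > c`,
i.e. the number of nodes in column `c`. -/
noncomputable def conj (l : ℕ → ℕ) (c : ℕ) : ℕ := sInf {a | l a ≤ c}

/-- `A` is an arm sequence for `n`: `t - 1 ≤ A t ≤ (n-1)t` for `t ≥ 1`, and
`A (t + u) ∈ {A t + A u, A t + A u + 1}`.  (The value `A 0` is irrelevant; in the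
definition of the order on nodes it is read as `0`, via `Aext`.) -/
def IsArmSeq (n : ℕ) (A : ℕ → ℤ) : Prop :=
  (∀ t : ℕ, 1 ≤ t → (t : ℤ) - 1 ≤ A t ∧ A t ≤ ((n : ℤ) - 1) * t) ∧
  (∀ t u : ℕ, 1 ≤ t → 1 ≤ u → A (t + u) = A t + A u ∨ A (t + u) = A t + A u + 1)

/-- `A` extended by `A 0 = 0`. -/
def Aext (A : ℕ → ℤ) (t : ℕ) : ℤ := if t = 0 then 0 else A t

/-- The `(a, c)`-hook of `l` is illegal with parameter `t ≥ 1`: `(a, c)` is a node of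
`l` whose hook length is `n * t` and whose arm length is `A t`. -/
def IllegalHook (n : ℕ) (A : ℕ → ℤ) (l : ℕ → ℕ) (a c t : ℕ) : Prop :=
  1 ≤ t ∧ c < l a ∧
  ((l a : ℤ) + conj l c = (n : ℤ) * t + a + c + 1) ∧
  ((l a : ℤ) = A t + c + 1)

/-- `l` is `A`-regular: it has no illegal hook. -/
def ARegular (n : ℕ) (A : ℕ → ℤ) (l : ℕ → ℕ) : Prop :=
  ¬ ∃ a c t, IllegalHook n A l a c t

/-- `(a, c)` is a removable node of `l`. -/
def Removable (l : ℕ → ℕ) (a c : ℕ) : Prop := l a = c + 1 ∧ l (a + 1) ≤ c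

/-- `(a, c)` is an addable node of `l`. -/
def Addable (l : ℕ → ℕ) (a c : ℕ) : Prop := l a = c ∧ (a = 0 ∨ c < l (a - 1))

/-- The residue of the node `(a, c)` (0-indexed), namely `c - a ∈ ℤ/nℤ`. -/
def res (n : ℕ) (x : ℕ × ℕ) : ZMod n := (x.2 : ZMod n) - (x.1 : ZMod n)

/-- The total order `≻` determined by the arm sequence `A` on the nodes of a fixed
residue: for distinct same-residue nodes `x = (a, c)` and `y = (b, d)`, if the axial
distance `b - a + c - d` equals `n t` with `t ≥ 0` then `x ≻ y` iff `c - d > A t`, while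
if `a - b + d - c = n t` with `t ≥ 0` then `x ≻ y` iff `d - c ≤ A t` (reading `A 0 = 0`). -/
def NodeGt (n : ℕ) (A : ℕ → ℤ) (x y : ℕ × ℕ) : Prop :=
  (∃ t : ℕ, (y.1 : ℤ) - x.1 + x.2 - y.2 = (n : ℤ) * t ∧ Aext A t < (x.2 : ℤ) - y.2) ∨
  (∃ t : ℕ, (x.1 : ℤ) - y.1 + y.2 - x.2 = (n : ℤ) * t ∧ (y.2 : ℤ) - x.2 ≤ Aext A t ∧ x ≠ y)

/-- The (finite) set of addable and removable `i`-nodes of `l`. -/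
noncomputable def ARset (n : ℕ) (l : ℕ → ℕ) (i : ZMod n) : Finset (ℕ × ℕ) :=
  ((Finset.range (conj l 0 + 1)) ×ˢ (Finset.range (l 0 + 1))).filter
    (fun x => res n x = i ∧ (Addable l x.1 x.2 ∨ Removable l x.1 x.2))

/-- The sign of a node in the ±-sequence: `+1` if addable, `-1` if removable. -/
noncomputable def sgnNode (l : ℕ → ℕ) (x : ℕ × ℕ) : ℤ :=
  if Addable l x.1 x.2 then 1 else if Removable l x.1 x.2 then -1 else 0

/-- Minus the partial sum of signs over the addable/removable `i`-nodes `y ⪰ x`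
(the prefix of the ±-sequence ending at `x`, the nodes being listed in decreasing
`≻`-order). -/
noncomputable def Gnode (n : ℕ) (A : ℕ → ℤ) (l : ℕ → ℕ) (i : ZMod n) (x : ℕ × ℕ) : ℤ :=
  -(∑ y ∈ (ARset n l i).filter (fun y => y = x ∨ NodeGt n A y x), sgnNode l y)

/-- The sum of signs over the addable/removable `i`-nodes `y ⪯ x` (the suffix of the
±-sequence starting at `x`). -/
noncomputable def Hnode (n : ℕ) (A : ℕ → ℤ) (l : ℕ → ℕ) (i : ZMod n) (x : ℕ × ℕ) : ℤ :=
  ∑ y ∈ (ARset n l i).filter (fun y => y = x ∨ NodeGt n A x y), sgnNode l y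

/-- `ε_i(λ)`: the maximum of `0` and the partial sums `Gnode`. -/
noncomputable def epsP (n : ℕ) (A : ℕ → ℤ) (l : ℕ → ℕ) (i : ZMod n) : ℤ :=
  (ARset n l i).fold max 0 (Gnode n A l i)

/-- `φ_i(λ)`: the maximum of `0` and the partial sums `Hnode`. -/
noncomputable def phiP (n : ℕ) (A : ℕ → ℤ) (l : ℕ → ℕ) (i : ZMod n) : ℤ :=
  (ARset n l i).fold max 0 (Hnode n A l i)

/-- The `i`-good node of `l`: the node in the good position of the ±-sequence, i.e. the
`≻`-greatest addable/removable `i`-node achieving `Gnode = ε_i > 0` (or `none`). -/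
noncomputable def goodNode (n : ℕ) (A : ℕ → ℤ) (l : ℕ → ℕ) (i : ZMod n) : Option (ℕ × ℕ) :=
  if hx : ∃ x ∈ ARset n l i, 0 < epsP n A l i ∧ Gnode n A l i x = epsP n A l i ∧
      ∀ y ∈ ARset n l i, NodeGt n A y x → Gnode n A l i y ≠ epsP n A l i
  then some hx.choose else none

/-- The `i`-cogood node of `l`: the node in the cogood position of the ±-sequence, i.e.
the `≻`-least addable/removable `i`-node achieving `Hnode = φ_i > 0` (or `none`). -/
noncomputable def cogoodNode (n : ℕ) (A : ℕ → ℤ) (l : ℕ → ℕ) (i : ZMod n) :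
    Option (ℕ × ℕ) :=
  if hx : ∃ x ∈ ARset n l i, 0 < phiP n A l i ∧ Hnode n A l i x = phiP n A l i ∧
      ∀ y ∈ ARset n l i, NodeGt n A x y → Hnode n A l i y ≠ phiP n A l i
  then some hx.choose else none

/-- The crystal operator `ẽ_i`: remove the `i`-good node (shorten its row by one), or
`none` (the ghost element `0`) if there is none. -/
noncomputable def et (n : ℕ) (A : ℕ → ℤ) (l : ℕ → ℕ) (i : ZMod n) : Option (ℕ → ℕ) :=
  (goodNode n A l i).map fun x => Function.update l x.1 (l x.1 - 1)

/-- The crystal operator `f̃_i`: add the `i`-cogood node (lengthen its row by one), or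
`none` (the ghost element `0`) if there is none. -/
noncomputable def ft (n : ℕ) (A : ℕ → ℤ) (l : ℕ → ℕ) (i : ZMod n) : Option (ℕ → ℕ) :=
  (cogoodNode n A l i).map fun x => Function.update l x.1 (l x.1 + 1)

/-! The addable and removable `i`-nodes, listed in `≻`-order, form the ±-sequence; `ẽ_i`
removes the node at its good position and `f̃_i` adds the node at its cogood position.
Removing a removable `i`-node changes the status of no other `i`-node (the nodes whose status
changes are its neighbours, of residues `i ± 1`), so it turns one `-` of the ±-sequence into a
`+`. In any ±-sequence, turning the good `-` into a `+` makes it the cogood position: the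
partial sums from the end are raised by `2` exactly up to that position, and the maximality
of the good position bounds all the others. Reversing the order and negating all signs
exchanges good and cogood positions, which gives the converse.

That `≻` is a strict total order on each residue class follows from extending `A` to negative
arguments by `A (-t) = -A t - 1`: then `x ≻ y` says that the column difference of `x` and `y`
exceeds `A t`, where `n t` is their content difference, and the arm sequence axiom becomes
`A (t + u) ≤ A t + A u + 1` for all integers `t`, `u`. -/

theorem dite_choose_eq_some_iff {β : Type*} {P : β → Prop} {_ : Decidable (∃ x, P x)}
    (huniq : ∀ x y, P x → P y → x = y) {x : β} :
    (if h : ∃ x, P x then some h.choose else none) = some x ↔ P x := by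
  split_ifs with h
  · exact ⟨fun hx => Option.some_injective _ hx ▸ h.choose_spec,
      fun hx => congrArg some (huniq _ _ h.choose_spec hx)⟩
  · simpa using fun hx => h ⟨x, hx⟩

section Signature

variable {α : Type*}

theorem exists_forall_not_rel {R : α → α → Prop} [IsStrictOrder α R] {U : Finset α}
    (hU : U.Nonempty) : ∃ b ∈ U, ∀ z ∈ U, ¬ R b z := by
  obtain ⟨⟨b, hb⟩, -, hmin⟩ := (U.finite_toSet.wellFoundedOn (r := Function.swap R)).has_min
    Set.univ ⟨⟨_, hU.choose_spec⟩, trivial⟩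
  exact ⟨b, hb, fun z hz => hmin ⟨z, hz⟩ trivial⟩

variable [DecidableEq α]

section Defs

/- A ±-sequence is a finset `T` listed in decreasing order for a strict order `R` (`R y x`:
`y` comes before `x`) with signs `s`; `upperSum` and `lowerSum` are its partial sums ending
and starting at `x`. -/
variable (T : Finset α) (R : α → α → Prop) (s : α → ℤ)

noncomputable def upperSum (x : α) : ℤ := ∑ y ∈ T with y = x ∨ R y x, s y

noncomputable def strictUpperSum (x : α) : ℤ := ∑ y ∈ T with R y x, s y

noncomputable def lowerSum (x : α) : ℤ := ∑ y ∈ T with y = x ∨ R x y, s y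

noncomputable def eps : ℤ := T.fold max 0 fun y => -upperSum T R s y

noncomputable def phi : ℤ := T.fold max 0 (lowerSum T R s)

def IsGood (x : α) : Prop :=
  x ∈ T ∧ 0 < eps T R s ∧ -upperSum T R s x = eps T R s ∧
    ∀ y ∈ T, R y x → -upperSum T R s y ≠ eps T R s

def IsCogood (x : α) : Prop :=
  x ∈ T ∧ 0 < phi T R s ∧ lowerSum T R s x = phi T R s ∧
    ∀ y ∈ T, R x y → lowerSum T R s y ≠ phi T R s

end Defs

variable {T : Finset α} {R : α → α → Prop} {s s' : α → ℤ} {x y : α}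

theorem upperSum_eq_add_strictUpperSum [Std.Irrefl R] (hx : x ∈ T) :
    upperSum T R s x = s x + strictUpperSum T R s x := by
  rw [upperSum, Finset.filter_or, Finset.sum_union, Finset.filter_eq', if_pos hx,
    Finset.sum_singleton, strictUpperSum]
  exact Finset.disjoint_filter.2 fun y _ hyx hR => irrefl_of R y (hyx ▸ hR)

theorem upperSum_eq_sum_of_forall_not_rel
    (htot : (T : Set α).Pairwise fun x y => R x y ∨ R y x)
    (hx : x ∈ T) (hmin : ∀ z ∈ T, ¬ R x z) : upperSum T R s x = ∑ z ∈ T, s z := by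
  rw [upperSum, Finset.filter_true_of_mem]
  intro z hz
  by_cases hzx : z = x
  · exact Or.inl hzx
  · exact Or.inr ((htot hz hx hzx).resolve_right (hmin z hz))

theorem lowerSum_add_strictUpperSum [IsStrictOrder α R]
    (htot : (T : Set α).Pairwise fun x y => R x y ∨ R y x) (hx : x ∈ T) :
    lowerSum T R s x + strictUpperSum T R s x = ∑ z ∈ T, s z := by
  rw [lowerSum, strictUpperSum, ← Finset.sum_filter_add_sum_filter_not T (fun z => z = x ∨ R x z)]
  congr 1
  refine Finset.sum_congr (Finset.filter_congr fun z hz => ?_) fun _ _ => rfl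
  refine ⟨?_, fun hzx => ?_⟩
  · rintro hzx (rfl | hxz)
    · exact irrefl_of R z hzx
    · exact asymm_of R hzx hxz
  · exact (htot hz hx fun h => hzx (Or.inl h)).resolve_right fun h => hzx (Or.inr h)

theorem neg_strictUpperSum_le [IsStrictOrder α R]
    (htot : (T : Set α).Pairwise fun x y => R x y ∨ R y x) {B : ℤ} (hB : 0 ≤ B)
    (h : ∀ z ∈ T, R z x → -upperSum T R s z ≤ B) : -strictUpperSum T R s x ≤ B := by
  rcases (T.filter (R · x)).eq_empty_or_nonempty with hU | hU
  · simpa [strictUpperSum, hU] using hB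
  obtain ⟨z, hz, hmin⟩ := exists_forall_not_rel (R := R) hU
  rw [Finset.mem_filter] at hz
  have hcover : T.filter (R · x) = T.filter (fun w => w = z ∨ R w z) := by
    ext w
    simp only [Finset.mem_filter]
    refine ⟨fun ⟨hw, hwx⟩ => ⟨hw, ?_⟩, ?_⟩
    · by_cases hwz : w = z
      · exact Or.inl hwz
      · exact Or.inr ((htot hw hz.1 hwz).resolve_right (hmin w (by simp [hw, hwx])))
    · rintro ⟨hw, rfl | hwz⟩
      · exact ⟨hw, hz.2⟩
      · exact ⟨hw, trans_of R hwz hz.2⟩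
  rw [strictUpperSum, hcover]
  exact h z hz.1 hz.2

theorem neg_upperSum_le_eps (hx : x ∈ T) : -upperSum T R s x ≤ eps T R s := by
  rw [eps, Finset.le_fold_max]
  exact Or.inr ⟨x, hx, le_rfl⟩

theorem eps_nonneg : 0 ≤ eps T R s := by
  rw [eps, Finset.le_fold_max]
  exact Or.inl le_rfl

theorem neg_eps_le_sum [IsStrictOrder α R]
    (htot : (T : Set α).Pairwise fun x y => R x y ∨ R y x) : -eps T R s ≤ ∑ z ∈ T, s z := by
  rcases T.eq_empty_or_nonempty with rfl | hT
  · simp [eps]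
  obtain ⟨b, hb, hmin⟩ := exists_forall_not_rel (R := R) hT
  linarith [neg_upperSum_le_eps (s := s) (R := R) hb,
    upperSum_eq_sum_of_forall_not_rel (s := s) htot hb hmin]

theorem lowerSum_eq_of_eq_add_ite [IsStrictOrder α R]
    (htot : (T : Set α).Pairwise fun x y => R x y ∨ R y x) (hx : x ∈ T) (hy : y ∈ T)
    (hs' : ∀ y ∈ T, s' y = s y + if y = x then 2 else 0) :
    lowerSum T R s' y =
      ∑ z ∈ T, s z - strictUpperSum T R s y + if x = y ∨ R y x then 2 else 0 := by
  rw [lowerSum, Finset.sum_congr rfl fun z hz => hs' z (Finset.mem_filter.1 hz).1,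
    Finset.sum_add_distrib, Finset.sum_ite_eq', ← lowerSum]
  have := lowerSum_add_strictUpperSum (s := s) htot hy
  simp only [Finset.mem_filter, hx, true_and]
  split_ifs <;> linarith

theorem IsGood.unique (htot : (T : Set α).Pairwise fun x y => R x y ∨ R y x)
    (hx : IsGood T R s x) (hy : IsGood T R s y) : x = y := by
  by_contra hxy
  rcases htot hx.1 hy.1 hxy with h | h
  · exact hy.2.2.2 x hx.1 h hx.2.2.1
  · exact hx.2.2.2 y hy.1 h hy.2.2.1

theorem IsGood.neg_strictUpperSum_lt [IsStrictOrder α R]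
    (htot : (T : Set α).Pairwise fun x y => R x y ∨ R y x) (hx : IsGood T R s x)
    (hy : y ∈ T) (hxy : x = y ∨ R y x) : -strictUpperSum T R s y < eps T R s := by
  obtain ⟨-, hpos, -, hmax⟩ := hx
  suffices -strictUpperSum T R s y ≤ eps T R s - 1 by omega
  refine neg_strictUpperSum_le htot (by omega) fun z hz hzy => ?_
  have hzx : R z x := by
    rcases hxy with rfl | hyx
    · exact hzy
    · exact trans_of R hzy hyx
  have := neg_upperSum_le_eps (s := s) (R := R) hz
  have := hmax z hz hzx
  omega

theorem IsGood.apply_neg [IsStrictOrder α R]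
    (htot : (T : Set α).Pairwise fun x y => R x y ∨ R y x) (hx : IsGood T R s x) : s x < 0 := by
  have h := hx.neg_strictUpperSum_lt htot hx.1 (Or.inl rfl)
  have h' := hx.2.2.1
  rw [upperSum_eq_add_strictUpperSum hx.1] at h'
  omega

theorem IsGood.isCogood [IsStrictOrder α R]
    (htot : (T : Set α).Pairwise fun x y => R x y ∨ R y x) (hx : IsGood T R s x)
    (hsx : s x = -1) (hs' : ∀ y ∈ T, s' y = s y + if y = x then 2 else 0) :
    IsCogood T R s' x := by
  have hxT := hx.1
  have hlower (y) (hy : y ∈ T) := lowerSum_eq_of_eq_add_ite (R := R) htot hxT hy hs'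
  have hS := neg_eps_le_sum (R := R) (s := s) htot
  set ε := eps T R s
  set S := ∑ z ∈ T, s z
  have hx' : -strictUpperSum T R s x = ε - 1 := by
    have h := hx.2.2.1
    rw [upperSum_eq_add_strictUpperSum hxT, hsx] at h
    linarith
  have hLx : lowerSum T R s' x = S + ε + 1 := by
    rw [hlower x hxT, if_pos (Or.inl rfl)]
    linarith
  have hbound : ∀ y ∈ T, lowerSum T R s' y ≤ S + ε + 1 ∧
      (R x y → lowerSum T R s' y < S + ε + 1) := by
    intro y hy
    rw [hlower y hy]
    by_cases hxy : x = y ∨ R y x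
    · rw [if_pos hxy]
      refine ⟨by linarith [hx.neg_strictUpperSum_lt htot hy hxy], fun hR => ?_⟩
      rcases hxy with rfl | hyx
      · exact absurd hR (irrefl_of R x)
      · exact absurd hR (asymm_of R hyx)
    · rw [if_neg hxy]
      have := neg_strictUpperSum_le (s := s) (x := y) htot eps_nonneg fun z hz _ =>
        neg_upperSum_le_eps (s := s) (R := R) hz
      constructor <;> intros <;> linarith
  have hphi : phi T R s' = S + ε + 1 :=
    le_antisymm ((Finset.fold_max_le _).2 ⟨by linarith, fun y hy => (hbound y hy).1⟩)
      (hLx ▸ (Finset.le_fold_max _).2 (Or.inr ⟨x, hxT, le_rfl⟩))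
  refine ⟨hxT, by linarith [hx.2.1], hLx.trans hphi.symm, fun y hy hxy => ?_⟩
  rw [hphi]
  exact ((hbound y hy).2 hxy).ne

theorem isCogood_iff_isGood_swap : IsCogood T R s x ↔ IsGood T (Function.swap R) (-s) x := by
  have hsum : (fun y => -upperSum T (Function.swap R) (-s) y) = lowerSum T R s := by
    funext y
    simp only [upperSum, Pi.neg_apply, Finset.sum_neg_distrib, neg_neg]
    rfl
  have heps : eps T (Function.swap R) (-s) = phi T R s := by
    rw [eps, hsum, phi]
  simp only [IsGood, IsCogood, heps]
  rw [← hsum]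

theorem IsCogood.unique (htot : (T : Set α).Pairwise fun x y => R x y ∨ R y x)
    (hx : IsCogood T R s x) (hy : IsCogood T R s y) : x = y :=
  (isCogood_iff_isGood_swap.1 hx).unique (htot.imp fun _ _ => Or.symm)
    (isCogood_iff_isGood_swap.1 hy)

theorem IsCogood.apply_pos [IsStrictOrder α R]
    (htot : (T : Set α).Pairwise fun x y => R x y ∨ R y x) (hx : IsCogood T R s x) :
    0 < s x := by
  simpa using (isCogood_iff_isGood_swap.1 hx).apply_neg (htot.imp fun _ _ => Or.symm)

theorem isGood_iff_isCogood [IsStrictOrder α R]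
    (htot : (T : Set α).Pairwise fun x y => R x y ∨ R y x)
    (hsx : s x = -1) (hs' : ∀ y ∈ T, s' y = s y + if y = x then 2 else 0) :
    IsGood T R s x ↔ IsCogood T R s' x := by
  refine ⟨fun hx => hx.isCogood htot hsx hs', fun hx => ?_⟩
  have hxT := hx.1
  have h := (isCogood_iff_isGood_swap.1 hx).isCogood (htot.imp fun _ _ => Or.symm) (s' := -s)
    (by simp [hs' x hxT, hsx]) fun y hy => by simp [hs' y hy]
  simpa using isCogood_iff_isGood_swap.1 h

end Signature
section Order

variable {n : ℕ} {A : ℕ → ℤ}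

def armExt (A : ℕ → ℤ) (t : ℤ) : ℤ :=
  if 0 ≤ t then Aext A t.toNat else -Aext A (-t).toNat - 1

theorem aext_add (hA : IsArmSeq n A) (p q : ℕ) :
    Aext A p + Aext A q ≤ Aext A (p + q) ∧ Aext A (p + q) ≤ Aext A p + Aext A q + 1 := by
  rcases Nat.eq_zero_or_pos p with rfl | hp
  · simp [Aext]
  rcases Nat.eq_zero_or_pos q with rfl | hq
  · simp [Aext]
  simp only [Aext, if_neg hp.ne', if_neg hq.ne', if_neg (by omega : p + q ≠ 0)]
  rcases hA.2 p q hp hq with h | h <;> omega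

@[simp]
theorem armExt_natCast (p : ℕ) : armExt A p = Aext A p := by
  simp [armExt]

@[simp]
theorem armExt_zero : armExt A 0 = 0 := by
  simp [armExt, Aext]

theorem armExt_neg_natCast {p : ℕ} (hp : 0 < p) : armExt A (-p) = -Aext A p - 1 := by
  rw [armExt, if_neg (by omega)]
  simp

theorem armExt_neg {t : ℤ} (ht : t ≠ 0) : armExt A (-t) = -armExt A t - 1 := by
  unfold armExt
  split_ifs <;> first | omega | simp

theorem armExt_natCast_add_neg_le (hA : IsArmSeq n A) (p : ℕ) {q : ℕ} (hq : 0 < q) :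
    armExt A (p + -q) ≤ armExt A p + armExt A (-q) + 1 := by
  rw [armExt_natCast, armExt_neg_natCast hq]
  rcases le_total q p with hqp | hpq
  · have h := (aext_add hA (p - q) q).1
    rw [Nat.sub_add_cancel hqp] at h
    rw [show (p : ℤ) + -q = ((p - q : ℕ) : ℤ) by omega, armExt_natCast]
    linarith
  · rcases hpq.eq_or_lt with rfl | hpq
    · rw [add_neg_cancel, armExt_zero]
      linarith
    have h := (aext_add hA (q - p) p).2
    rw [Nat.sub_add_cancel hpq.le] at h
    rw [show (p : ℤ) + -q = -((q - p : ℕ) : ℤ) by omega, armExt_neg_natCast (by omega)]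
    linarith

theorem armExt_add_le (hA : IsArmSeq n A) (t u : ℤ) :
    armExt A (t + u) ≤ armExt A t + armExt A u + 1 := by
  rcases le_or_gt 0 t with ht | ht <;> rcases le_or_gt 0 u with hu | hu
  · lift t to ℕ using ht
    lift u to ℕ using hu
    rw [← Nat.cast_add, armExt_natCast, armExt_natCast, armExt_natCast]
    exact (aext_add hA t u).2
  · lift t to ℕ using ht
    obtain ⟨q, rfl⟩ : ∃ q : ℕ, u = -q := ⟨(-u).toNat, by omega⟩
    exact armExt_natCast_add_neg_le hA t (by omega)
  · lift u to ℕ using hu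
    obtain ⟨p, rfl⟩ : ∃ p : ℕ, t = -p := ⟨(-t).toNat, by omega⟩
    rw [add_comm]
    linarith [armExt_natCast_add_neg_le hA u (q := p) (by omega)]
  · obtain ⟨p, rfl⟩ : ∃ p : ℕ, t = -p := ⟨(-t).toNat, by omega⟩
    obtain ⟨q, rfl⟩ : ∃ q : ℕ, u = -q := ⟨(-u).toNat, by omega⟩
    rw [← neg_add, ← Nat.cast_add, armExt_neg_natCast (by omega), armExt_neg_natCast (by omega),
      armExt_neg_natCast (by omega)]
    linarith [(aext_add hA p q).1]

theorem nodeGt_iff (hn : 0 < n) {x y : ℕ × ℕ} :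
    NodeGt n A x y ↔ ∃ t : ℤ, ((x.2 : ℤ) - x.1) - ((y.2 : ℤ) - y.1) = n * t ∧
      armExt A t < (x.2 : ℤ) - y.2 := by
  obtain ⟨a, c⟩ := x
  obtain ⟨b, d⟩ := y
  simp only [NodeGt, ne_eq, Prod.mk.injEq]
  constructor
  · rintro (⟨t, ht, hlt⟩ | ⟨t, ht, hle, hne⟩)
    · exact ⟨t, by linarith, by simpa using hlt⟩
    · rcases Nat.eq_zero_or_pos t with rfl | ht0
      · refine ⟨0, by simp at ht ⊢; omega, ?_⟩
        simp [Aext] at hle ⊢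
        omega
      · refine ⟨-t, by linarith, ?_⟩
        rw [armExt_neg_natCast ht0]
        linarith
  · rintro ⟨t, ht, hlt⟩
    rcases le_or_gt 0 t with ht0 | ht0
    · lift t to ℕ using ht0
      exact Or.inl ⟨t, by linarith, by simpa using hlt⟩
    · obtain ⟨p, rfl⟩ : ∃ p : ℕ, t = -p := ⟨(-t).toNat, by omega⟩
      rw [armExt_neg_natCast (by omega)] at hlt
      refine Or.inr ⟨p, by linarith, by linarith, ?_⟩
      rintro ⟨rfl, rfl⟩
      have : (n : ℤ) * p = 0 := by linarith
      simp at this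
      omega

theorem isStrictOrder_nodeGt (hn : 0 < n) (hA : IsArmSeq n A) :
    IsStrictOrder (ℕ × ℕ) (NodeGt n A) where
  irrefl x h := by
    obtain ⟨t, ht, hlt⟩ := (nodeGt_iff hn).1 h
    obtain rfl : t = 0 := by simpa [hn.ne'] using ht.symm
    simp at hlt
  trans x y z hxy hyz := by
    obtain ⟨t, ht, hlt⟩ := (nodeGt_iff hn).1 hxy
    obtain ⟨u, hu, hlu⟩ := (nodeGt_iff hn).1 hyz
    exact (nodeGt_iff hn).2 ⟨t + u, by linarith, by linarith [armExt_add_le hA t u]⟩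

theorem res_eq_res_iff {x y : ℕ × ℕ} :
    res n x = res n y ↔ (n : ℤ) ∣ ((x.2 : ℤ) - x.1) - ((y.2 : ℤ) - y.1) := by
  rw [eq_comm, res, res, ← ZMod.intCast_eq_intCast_iff_dvd_sub]
  push_cast
  rfl

theorem nodeGt_or_nodeGt (hn : 0 < n) {x y : ℕ × ℕ} (hres : res n x = res n y) (hne : x ≠ y) :
    NodeGt n A x y ∨ NodeGt n A y x := by
  obtain ⟨t, ht⟩ := res_eq_res_iff.1 hres
  by_cases hlt : armExt A t < (x.2 : ℤ) - y.2
  · exact Or.inl ((nodeGt_iff hn).2 ⟨t, ht, hlt⟩)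
  refine Or.inr ((nodeGt_iff hn).2 ⟨-t, by linarith, ?_⟩)
  rcases eq_or_ne t 0 with rfl | ht0
  · have hcol : x.2 ≠ y.2 := fun h => hne (Prod.ext (by simp at ht; omega) h)
    simp at hlt ⊢
    omega
  · rw [armExt_neg ht0]
    linarith

end Order
section Nodes

variable {n : ℕ} {A : ℕ → ℤ} {l : ℕ → ℕ} {i : ZMod n} {a c : ℕ}

theorem IsPartition.antitone (hl : IsPartition l) : Antitone l :=
  antitone_nat_of_succ_le hl.1

theorem IsPartition.apply_conj_zero (hl : IsPartition l) : l (conj l 0) = 0 := by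
  obtain ⟨N, hN⟩ := hl.2
  exact Nat.le_zero.1 (Nat.sInf_mem (s := {a | l a ≤ 0}) ⟨N, hN.le⟩)

theorem IsPartition.update_of_removable (hl : IsPartition l) (hrem : Removable l a c) :
    IsPartition (Function.update l a c) := by
  obtain ⟨hla, hla1⟩ := hrem
  refine ⟨fun b => ?_, ?_⟩
  · rcases eq_or_ne b a with rfl | hba
    · rw [Function.update_self, Function.update_of_ne (by omega)]
      exact hla1
    rw [Function.update_of_ne hba]
    rcases eq_or_ne (b + 1) a with rfl | hb1a
    · rw [Function.update_self]
      linarith [hl.1 b]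
    · rw [Function.update_of_ne hb1a]
      exact hl.1 b
  · obtain ⟨N, hN⟩ := hl.2
    exact ⟨N, by rw [Function.update_of_ne (by rintro rfl; omega)]; exact hN⟩

theorem addable_update_of_removable (hl : IsPartition l) (hrem : Removable l a c) :
    Addable (Function.update l a c) a c := by
  refine ⟨Function.update_self a c l, ?_⟩
  rcases Nat.eq_zero_or_pos a with rfl | ha
  · exact Or.inl rfl
  · rw [Function.update_of_ne (by omega)]
    have := hl.antitone (Nat.sub_le a 1)
    have := hrem.1
    omega

theorem removable_update_of_addable (hl : IsPartition l) (hadd : Addable l a c) :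
    Removable (Function.update l a (c + 1)) a c := by
  refine ⟨Function.update_self a _ l, ?_⟩
  rw [Function.update_of_ne (by omega)]
  exact hadd.1 ▸ hl.1 a

theorem sgnNode_of_addable {b d : ℕ} (h : Addable l b d) : sgnNode l (b, d) = 1 :=
  if_pos h

theorem sgnNode_of_removable {b d : ℕ} (h : Removable l b d) : sgnNode l (b, d) = -1 := by
  have : ¬ Addable l b d := fun h' => by
    have := h.1; have := h'.1; omega
  rw [sgnNode, if_neg this, if_pos h]

theorem removable_of_sgnNode_neg {b d : ℕ} (h : sgnNode l (b, d) < 0) : Removable l b d := by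
  unfold sgnNode at h
  split_ifs at h with h1 h2
  · omega
  · exact h2
  · omega

theorem addable_of_sgnNode_pos {b d : ℕ} (h : 0 < sgnNode l (b, d)) : Addable l b d := by
  unfold sgnNode at h
  split_ifs at h with h1
  · exact h1
  all_goals omega

theorem sgnNode_ne_zero_iff {x : ℕ × ℕ} :
    sgnNode l x ≠ 0 ↔ Addable l x.1 x.2 ∨ Removable l x.1 x.2 := by
  unfold sgnNode
  split_ifs <;> simp_all

theorem mem_ARset_iff (hl : IsPartition l) {x : ℕ × ℕ} :
    x ∈ ARset n l i ↔ res n x = i ∧ sgnNode l x ≠ 0 := by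
  rw [ARset, Finset.mem_filter, sgnNode_ne_zero_iff]
  refine ⟨fun h => h.2, fun h => ⟨?_, h⟩⟩
  obtain ⟨b, d⟩ := x
  have h0 := hl.apply_conj_zero
  have hb := hl.antitone (Nat.zero_le b)
  have hzero : ∀ k, conj l 0 ≤ k → l k = 0 := fun k hk =>
    Nat.eq_zero_of_le_zero (h0 ▸ hl.antitone hk)
  simp only [Finset.mem_product, Finset.mem_range]
  dsimp only at h
  rcases h.2 with ⟨h1, h2⟩ | ⟨h1, h2⟩
  · have := hzero (b - 1)
    omega
  · have := hzero b
    omega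

theorem res_of_mem_ARset {x : ℕ × ℕ} (hx : x ∈ ARset n l i) : res n x = i :=
  (Finset.mem_filter.1 hx).2.1

theorem pairwise_nodeGt_ARset (hn : 0 < n) :
    (ARset n l i : Set (ℕ × ℕ)).Pairwise fun x y => NodeGt n A x y ∨ NodeGt n A y x :=
  fun _ hx _ hy hne =>
    nodeGt_or_nodeGt hn ((res_of_mem_ARset hx).trans (res_of_mem_ARset hy).symm) hne

-- The nodes whose status changes are `(a, c)` and its neighbours, of residues `i ± 1 ≠ i`.
theorem sgnNode_update_of_removable (hn : 2 ≤ n) (hrem : Removable l a c) {y : ℕ × ℕ}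
    (hres : res n y = res n (a, c)) (hne : y ≠ (a, c)) :
    sgnNode (Function.update l a c) y = sgnNode l y := by
  obtain ⟨b, d⟩ := y
  have hsep : -2 < ((d : ℤ) - b) - ((c : ℤ) - a) → ((d : ℤ) - b) - ((c : ℤ) - a) < 2 →
      ((d : ℤ) - b) - ((c : ℤ) - a) = 0 := fun h1 h2 =>
    Int.eq_zero_of_abs_lt_dvd (res_eq_res_iff.1 hres) (abs_lt.2 ⟨by omega, by omega⟩)
  have hne' : ¬(b = a ∧ d = c) := by simpa using hne
  obtain ⟨hla, hla1⟩ := hrem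
  obtain rfl | rfl | rfl | ⟨h1, h2, h3⟩ :
      b = a ∨ b + 1 = a ∨ b = a + 1 ∨ (b ≠ a ∧ b + 1 ≠ a ∧ b ≠ a + 1) := by omega
  all_goals
    simp only [sgnNode, Addable, Removable, Function.update_apply, Nat.add_sub_cancel]
    split_ifs <;> omega

theorem ARset_update_of_removable (hn : 2 ≤ n) (hl : IsPartition l) (hrem : Removable l a c)
    (hi : res n (a, c) = i) : ARset n (Function.update l a c) i = ARset n l i := by
  ext y
  rw [mem_ARset_iff (hl.update_of_removable hrem), mem_ARset_iff hl]
  by_cases hy : y = (a, c)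
  · subst hy
    simp [hi, sgnNode_of_addable (addable_update_of_removable hl hrem),
      sgnNode_of_removable hrem]
  · refine and_congr_right fun hyi => ?_
    rw [sgnNode_update_of_removable hn hrem (hyi.trans hi.symm) hy]

theorem goodNode_eq_some_iff (hn : 0 < n) {x : ℕ × ℕ} :
    goodNode n A l i = some x ↔ IsGood (ARset n l i) (NodeGt n A) (sgnNode l) x := by
  unfold goodNode
  exact dite_choose_eq_some_iff fun _ _ => IsGood.unique (pairwise_nodeGt_ARset hn)

theorem cogoodNode_eq_some_iff (hn : 0 < n) {x : ℕ × ℕ} :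
    cogoodNode n A l i = some x ↔ IsCogood (ARset n l i) (NodeGt n A) (sgnNode l) x := by
  unfold cogoodNode
  exact dite_choose_eq_some_iff fun _ _ => IsCogood.unique (pairwise_nodeGt_ARset hn)

theorem goodNode_eq_some_iff_cogoodNode_update_eq_some (hn : 2 ≤ n) (hA : IsArmSeq n A)
    (hl : IsPartition l) (hrem : Removable l a c) (hi : res n (a, c) = i) :
    goodNode n A l i = some (a, c) ↔ cogoodNode n A (Function.update l a c) i = some (a, c) := by
  have hn0 : 0 < n := by omega
  have := isStrictOrder_nodeGt hn0 hA
  rw [goodNode_eq_some_iff hn0, cogoodNode_eq_some_iff hn0,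
    ARset_update_of_removable hn hl hrem hi]
  refine isGood_iff_isCogood (pairwise_nodeGt_ARset hn0) (sgnNode_of_removable hrem)
    fun y hy => ?_
  split_ifs with hya
  · rw [hya, sgnNode_of_addable (addable_update_of_removable hl hrem), sgnNode_of_removable hrem]
    norm_num
  · rw [sgnNode_update_of_removable hn hrem ((res_of_mem_ARset hy).trans hi.symm) hya, add_zero]

end Nodes

theorem etilde_eq_iff_ftilde_eq_general (n : ℕ) (hn : 3 ≤ n)
    (A : ℕ → ℤ) (hA : IsArmSeq n A) (l m : ℕ → ℕ)
    (hl : IsPartition l) (hm : IsPartition m) (i : ZMod n) :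
    et n A l i = some m ↔ ft n A m i = some l := by
  have hn0 : 0 < n := by omega
  have := isStrictOrder_nodeGt hn0 hA
  constructor
  · intro h
    obtain ⟨⟨a, c⟩, hgood, rfl⟩ := Option.map_eq_some_iff.1 h
    have hx := (goodNode_eq_some_iff hn0).1 hgood
    have hrem : Removable l a c :=
      removable_of_sgnNode_neg (hx.apply_neg (pairwise_nodeGt_ARset hn0))
    rw [hrem.1, Nat.add_sub_cancel]
    rw [goodNode_eq_some_iff_cogoodNode_update_eq_some (by omega) hA hl hrem
      (res_of_mem_ARset hx.1)] at hgood
    simp [ft, hgood, ← hrem.1]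
  · intro h
    obtain ⟨⟨a, c⟩, hcog, rfl⟩ := Option.map_eq_some_iff.1 h
    have hx := (cogoodNode_eq_some_iff hn0).1 hcog
    have hadd : Addable m a c :=
      addable_of_sgnNode_pos (hx.apply_pos (pairwise_nodeGt_ARset hn0))
    have hrem := removable_update_of_addable hm hadd
    have hm' : Function.update (Function.update m a (c + 1)) a c = m := by
      rw [Function.update_idem, ← hadd.1, Function.update_eq_self]
    rw [hadd.1] at hl ⊢
    have hgood := (goodNode_eq_some_iff_cogoodNode_update_eq_some (by omega) hA hl hrem
      (res_of_mem_ARset hx.1)).2 (hm'.symm ▸ hcog)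
    simp [et, hgood, hm']

/-- Lemma 5.2 of the paper: for `A`-regular partitions `λ` and `μ`,
`ẽ_i λ = μ` if and only if `f̃_i μ = λ`. -/
theorem etilde_eq_iff_ftilde_eq (n : ℕ) (hn : 3 ≤ n)
    (A : ℕ → ℤ) (hA : IsArmSeq n A) (l m : ℕ → ℕ)
    (hl : IsPartition l) (hm : IsPartition m)
    (hlreg : ARegular n A l) (hmreg : ARegular n A m) (i : ZMod n) :
    et n A l i = some m ↔ ft n A m i = some l :=
  etilde_eq_iff_ftilde_eq_general n hn A hA l m hl hm i

end ArmCrystal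
end

section
/- Fix n ≥ 3 and call the arm sequences (0, 1, 2, …) and (n−1, 2(n−1), 3(n−1), …) extreme. Suppose A is a non-extreme arm sequence. Then: (1) for each t ≥ 1, t ≤ A_t ≤ (n−1)t − 1; (2) for each u ≥ 1, the partition λ = (A_u + 1, 1^{nu − A_u − 1}) possesses an illegal hook of length nu (namely the (1,1)-hook), but possesses no illegal hook of length nt for any t ≠ u. -/
/-!  Partitions, arm sequences and the crystal operators `ẽ_i`, `f̃_i` of the paper
"Partition models for the crystal of the basic `U_q(ŝl_n)`-module".

A partition is modelled as a function `l : ℕ → ℕ` listing the parts, with rows indexed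
from `0`; the Young diagram consists of the nodes `(a, c)` (row `a`, column `c`, both
`0`-indexed) with `c < l a`.  The node `(a, c)` here corresponds to the node
`(a + 1, c + 1)` in the (1-indexed) conventions of the paper; in particular its residue
is `c - a (mod n)`, its arm length is `l a - c - 1`, and its hook length is
`l a - c + l' c - a - 1`, where `l'` is the conjugate partition. -/

attribute [local instance] Classical.propDecidable

namespace ArmCrystal

lemma aux_zero (D : ℕ → ℤ) (h0 : ∀ t, 1 ≤ t → 0 ≤ D t)
    (hadd : ∀ t u, 1 ≤ t → 1 ≤ u → D (t + u) = D t + D u - 1 ∨ D (t + u) = D t + D u)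
    (s : ℕ) (hs : 1 ≤ s) (hDs : D s = 0) : ∀ t, 1 ≤ t → D t = 0 := by
  have hmul : ∀ k, 1 ≤ k → D (k * s) = 0 := by
    intro k
    induction k with
    | zero => intro h; omega
    | succ k ih =>
      intro _
      rcases Nat.eq_zero_or_pos k with hk0 | hk1
      · subst hk0; simpa using hDs
      · have hks : 1 ≤ k * s := Nat.mul_pos hk1 hs
        have h1 := hadd (k * s) s hks hs
        have h2 := ih hk1
        have h3 := h0 (k * s + s) (le_trans hs (Nat.le_add_left s _))
        have h4 : (k + 1) * s = k * s + s := by ring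
        rw [h4]
        omega
  have hpos : ∀ t, 1 ≤ t → 1 ≤ D t → ∀ k, 1 ≤ k → 1 ≤ D (k * t) := by
    intro t ht hDt k
    induction k with
    | zero => intro h; omega
    | succ k ih =>
      intro _
      rcases Nat.eq_zero_or_pos k with hk0 | hk1
      · subst hk0; simpa using hDt
      · have hkt : 1 ≤ k * t := Nat.mul_pos hk1 ht
        have h1 := hadd (k * t) t hkt ht
        have h2 := ih hk1
        have h4 : (k + 1) * t = k * t + t := by ring
        rw [h4]
        omega
  intro t ht
  by_contra hne
  have h1 : 1 ≤ D t := by have := h0 t ht; omega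
  have h2 := hpos t ht h1 s hs
  have h3 := hmul t ht
  rw [Nat.mul_comm] at h3
  omega

/-- Lemma 6.2 of the paper.  The extreme arm sequences are `(0, 1, 2, …)`
(i.e. `A t = t - 1`) and `(n-1, 2(n-1), …)` (i.e. `A t = (n-1) t`).  For a non-extreme
arm sequence `A`: (1) `t ≤ A t ≤ (n-1)t - 1` for all `t ≥ 1`; (2) for `u ≥ 1` the
partition `(A_u + 1, 1^{nu - A_u - 1})` has an illegal hook of length `nu` (its
`(1,1)`-hook, here the `(0,0)`-hook), but no illegal hook of length `nt` for `t ≠ u`. -/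
theorem nonextreme_arm_sequence_hooks (n : ℕ) (hn : 3 ≤ n)
    (A : ℕ → ℤ) (hA : IsArmSeq n A)
    (hne1 : ¬ ∀ t : ℕ, 1 ≤ t → A t = (t : ℤ) - 1)
    (hne2 : ¬ ∀ t : ℕ, 1 ≤ t → A t = ((n : ℤ) - 1) * t) :
    (∀ t : ℕ, 1 ≤ t → (t : ℤ) ≤ A t ∧ A t ≤ ((n : ℤ) - 1) * t - 1) ∧
    (∀ u : ℕ, 1 ≤ u →
      IllegalHook n A
        (fun a => if a = 0 then (A u).toNat + 1
          else if (a : ℤ) < (n : ℤ) * u - A u then 1 else 0) 0 0 u ∧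
      (∀ a c t : ℕ, t ≠ u →
        ¬ IllegalHook n A
          (fun a => if a = 0 then (A u).toNat + 1
            else if (a : ℤ) < (n : ℤ) * u - A u then 1 else 0) a c t)) := by
  obtain ⟨hbd, hadd⟩ := hA
  have part1 : ∀ t : ℕ, 1 ≤ t → (t : ℤ) ≤ A t ∧ A t ≤ ((n : ℤ) - 1) * t - 1 := by
    intro t ht
    constructor
    · by_contra h
      push_neg at h
      have hAt : A t - (t : ℤ) + 1 = 0 := by have := (hbd t ht).1; omega
      have hall := aux_zero (fun r => A r - (r : ℤ) + 1)
        (fun r hr => by have := (hbd r hr).1; omega)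
        (fun r v hr hv => by
          rcases hadd r v hr hv with h' | h' <;> [left; right] <;> push_cast <;> omega)
        t ht hAt
      exact hne1 (fun r hr => by have := hall r hr; omega)
    · by_contra h
      push_neg at h
      have hAt : ((n : ℤ) - 1) * t - A t = 0 := by have := (hbd t ht).2; omega
      have hall := aux_zero (fun r => ((n : ℤ) - 1) * r - A r)
        (fun r hr => by have := (hbd r hr).2; omega)
        (fun r v hr hv => by
          rcases hadd r v hr hv with h' | h' <;> [right; left] <;> push_cast <;>
            rw [h'] <;> ring)
        t ht hAt
      exact hne2 (fun r hr => by have := hall r hr; omega)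
  refine ⟨part1, fun u hu => ?_⟩
  set l : ℕ → ℕ := fun a => if a = 0 then (A u).toNat + 1
    else if (a : ℤ) < (n : ℤ) * u - A u then 1 else 0 with hl
  obtain ⟨hAu1, hAu2⟩ := part1 u hu
  have hAu0 : 0 ≤ A u := le_trans (by positivity) hAu1
  have hAucast : ((A u).toNat : ℤ) = A u := Int.toNat_of_nonneg hAu0
  have hmmpos : (u : ℤ) + 1 ≤ (n : ℤ) * u - A u := by
    have : ((n : ℤ) - 1) * u - 1 ≥ A u := by linarith
    nlinarith [hAu1]
  set m : ℕ := ((n : ℤ) * u - A u).toNat with hm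
  have hmcast : (m : ℤ) = (n : ℤ) * u - A u := by
    rw [hm]; exact Int.toNat_of_nonneg (by linarith [hmmpos, Int.natCast_nonneg u])
  have hm1 : 2 ≤ m := by
    have hu1 : (1 : ℤ) ≤ u := by exact_mod_cast hu
    omega
  have hl0 : l 0 = (A u).toNat + 1 := by simp [hl]
  have hla : ∀ a, 1 ≤ a → l a ≤ 1 := by
    intro a ha
    simp only [hl]
    rw [if_neg (by omega)]
    split <;> omega
  have hconj0 : conj l 0 = m := by
    have hmem : m ∈ {a | l a ≤ 0} := by
      simp only [Set.mem_setOf_eq, hl]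
      rw [if_neg (by omega), if_neg (by rw [hmcast]; omega)]
    refine le_antisymm (Nat.sInf_le hmem) ?_
    by_contra hlt
    push_neg at hlt
    have hmemInf := Nat.sInf_mem (⟨m, hmem⟩ : {a | l a ≤ 0}.Nonempty)
    set j := sInf {a | l a ≤ 0} with hj
    have hjl : l j ≤ 0 := hmemInf
    rcases Nat.eq_zero_or_pos j with hj0 | hj1
    · rw [hj0, hl0] at hjl; omega
    · have hjm : (j : ℤ) < m := by exact_mod_cast hlt
      simp only [hl] at hjl
      rw [if_neg (by omega), if_pos (by rw [← hmcast]; exact hjm)] at hjl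
      omega
  have hconjc : ∀ c, 1 ≤ c → conj l c ≤ 1 := by
    intro c hc
    refine Nat.sInf_le ?_
    simp only [Set.mem_setOf_eq]
    exact le_trans (hla 1 le_rfl) hc
  constructor
  · refine ⟨hu, ?_, ?_, ?_⟩
    · rw [hl0]; omega
    · rw [hl0, hconj0]
      push_cast [hAucast, hmcast]
      ring
    · rw [hl0]; push_cast [hAucast]; ring
  · rintro a c t htu ⟨ht, hc, hhook, harm⟩
    obtain ⟨hAt1, hAt2⟩ := part1 t ht
    have ht1 : (1 : ℤ) ≤ t := by exact_mod_cast ht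
    rcases Nat.eq_zero_or_pos a with ha0 | ha1
    · subst ha0
      rcases Nat.eq_zero_or_pos c with hc0 | hc1
      · subst hc0
        rw [hl0, hconj0] at hhook
        push_cast [hAucast, hmcast] at hhook
        have hnu : (n : ℤ) * u = (n : ℤ) * t := by linarith
        have : (u : ℤ) = t := by
          have hn0 : (n : ℤ) ≠ 0 := by positivity
          exact mul_left_cancel₀ hn0 hnu
        exact htu (by exact_mod_cast this.symm)
      · have hcle : (conj l c : ℤ) ≤ 1 := by exact_mod_cast hconjc c hc1
        have : (conj l c : ℤ) = (n : ℤ) * t - A t := by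
          rw [harm] at hhook; push_cast at hhook ⊢; linarith
        have : (t : ℤ) + 1 ≤ (conj l c : ℤ) := by rw [this]; nlinarith
        linarith
    · have hla1 : (l a : ℤ) ≤ 1 := by exact_mod_cast hla a ha1
      have : (2 : ℤ) ≤ (l a : ℤ) := by
        rw [harm]
        have : (0 : ℤ) ≤ c := by positivity
        linarith
      linarith

end ArmCrystal
end

section
/- Suppose n ≥ 3 and A, A' are distinct arm sequences. Then the set of A-regular partitions and the set of A'-regular partitions are distinct: there exists a partition lying in exactly one of R_A and R_{A'}. -/
/-!  Partitions, arm sequences and the crystal operators `ẽ_i`, `f̃_i` of the paper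
"Partition models for the crystal of the basic `U_q(ŝl_n)`-module".

A partition is modelled as a function `l : ℕ → ℕ` listing the parts, with rows indexed
from `0`; the Young diagram consists of the nodes `(a, c)` (row `a`, column `c`, both
`0`-indexed) with `c < l a`.  The node `(a, c)` here corresponds to the node
`(a + 1, c + 1)` in the (1-indexed) conventions of the paper; in particular its residue
is `c - a (mod n)`, its arm length is `l a - c - 1`, and its hook length is
`l a - c + l' c - a - 1`, where `l'` is the conjugate partition. -/

attribute [local instance] Classical.propDecidable

namespace ArmCrystal

lemma conj_eq_of {l : ℕ → ℕ} {c k : ℕ} (hk : l k ≤ c) (h : ∀ a, a < k → c < l a) :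
    conj l c = k := by
  refine le_antisymm (Nat.sInf_le hk) (le_csInf ⟨k, hk⟩ ?_)
  intro a ha
  by_contra h'
  exact absurd ha (not_le.mpr (h a (lt_of_not_ge h')))

/-- If `A 1 = n - 1` then `A t = (n-1)t` for all `t ≥ 1`. -/
lemma force_top {n : ℕ} {B : ℕ → ℤ} (hB : IsArmSeq n B) (h1 : B 1 = (n : ℤ) - 1) :
    ∀ t, 1 ≤ t → B t = ((n : ℤ) - 1) * t := by
  intro t ht
  induction t with
  | zero => omega
  | succ t ih =>
    rcases Nat.lt_or_ge 1 (t + 1) with h | h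
    · have ht1 : 1 ≤ t := by omega
      have ihv := ih ht1
      have hub := (hB.1 (t + 1) (by omega)).2
      have hadd := hB.2 t 1 ht1 le_rfl
      have e : ((n : ℤ) - 1) * ((t : ℕ) + 1 : ℕ) = ((n : ℤ) - 1) * t + ((n : ℤ) - 1) := by
        push_cast; ring
      rw [e]
      push_cast at hub
      rcases hadd with h' | h' <;> rw [h'] at hub ⊢ <;> nlinarith [hub, ihv]
    · have : t + 1 = 1 := by omega
      rw [this, h1]; push_cast; ring

/-- If `A 1 = 0` then `A t = t - 1` for all `t ≥ 1`. -/
lemma force_bot {n : ℕ} {B : ℕ → ℤ} (hB : IsArmSeq n B) (h1 : B 1 = 0) :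
    ∀ t, 1 ≤ t → B t = (t : ℤ) - 1 := by
  intro t ht
  induction t with
  | zero => omega
  | succ t ih =>
    rcases Nat.lt_or_ge 1 (t + 1) with h | h
    · have ht1 : 1 ≤ t := by omega
      have ihv := ih ht1
      have hlb := (hB.1 (t + 1) (by omega)).1
      have hadd := hB.2 t 1 ht1 le_rfl
      push_cast at hlb ⊢
      rcases hadd with h' | h' <;> rw [h'] at hlb ⊢ <;> omega
    · have : t + 1 = 1 := by omega
      rw [this, h1]; norm_num

/-- Proposition 6.1 of the paper: distinct arm sequences give distinct sets of
`A`-regular partitions: there is a partition lying in exactly one of `R_A`, `R_{A'}`. -/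
theorem distinct_arm_sequences_distinct_models (n : ℕ) (hn : 3 ≤ n)
    (A A' : ℕ → ℤ) (hA : IsArmSeq n A) (hA' : IsArmSeq n A')
    (hne : ∃ t : ℕ, 1 ≤ t ∧ A t ≠ A' t) :
    ∃ l : ℕ → ℕ, IsPartition l ∧ ¬ (ARegular n A l ↔ ARegular n A' l) := by
  -- choose a witness `T` with the extra property that either `T = 1` or `A 1 = A' 1`
  obtain ⟨T, hT1, hTne, hTkey⟩ : ∃ T, 1 ≤ T ∧ A T ≠ A' T ∧ (T = 1 ∨ A 1 = A' 1) := by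
    by_cases h : A 1 = A' 1
    · obtain ⟨t0, ht0, hne0⟩ := hne
      exact ⟨t0, ht0, hne0, Or.inr h⟩
    · exact ⟨1, le_rfl, h, Or.inl rfl⟩
  have hbd := hA.1 T hT1
  have hT1' : (1 : ℤ) ≤ (T : ℤ) := by exact_mod_cast hT1
  have hM0 : (0 : ℤ) ≤ A T := by omega
  obtain ⟨M, hMdef⟩ : ∃ M : ℕ, M = (A T).toNat := ⟨_, rfl⟩
  have hM : (M : ℤ) = A T := by rw [hMdef]; exact Int.toNat_of_nonneg hM0
  obtain ⟨P, hPdef⟩ : ∃ P : ℕ, P = n * T := ⟨_, rfl⟩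
  have hPZ : (P : ℤ) = (n : ℤ) * T := by rw [hPdef]; push_cast; ring
  have hnT : ((n : ℤ) - 1) * T = (n : ℤ) * T - T := by ring
  have hMup' : (M : ℤ) ≤ (P : ℤ) - T := by
    have := hbd.2
    linarith [hM, hPZ, hnT]
  have hMlt' : (M : ℤ) < (P : ℤ) := by linarith
  have hMlt : M < P := by exact_mod_cast hMlt'
  obtain ⟨r, hrdefn⟩ : ∃ r : ℕ, r = P - M := ⟨_, rfl⟩
  have hr : (r : ℤ) = (P : ℤ) - M := by
    rw [hrdefn]; push_cast [Nat.cast_sub hMlt.le]; ring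
  have hr1 : 1 ≤ r := by omega
  set l : ℕ → ℕ := fun a => if a = 0 then M + 1 else if a < r then 1 else 0 with hldef
  have hl0 : l 0 = M + 1 := by simp [hldef]
  have hlrow : ∀ a, 1 ≤ a → a < r → l a = 1 := by
    intro a ha har; simp only [hldef]; split_ifs <;> first | contradiction | omega
  have hlz : ∀ a, r ≤ a → l a = 0 := by
    intro a ha; simp only [hldef]; split_ifs <;> first | contradiction | omega
  -- conjugate values
  have hconj0 : conj l 0 = r := by
    apply conj_eq_of
    · rw [hlz r le_rfl]
    · intro a ha
      rcases Nat.eq_zero_or_pos a with h0 | h0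
      · rw [h0, hl0]; omega
      · rw [hlrow a h0 ha]; omega
  have hconjc : ∀ c, 1 ≤ c → c ≤ M → conj l c = 1 := by
    intro c hc1 hcM
    apply conj_eq_of
    · rcases Nat.lt_or_ge 1 r with h | h
      · rw [hlrow 1 le_rfl h]; omega
      · rw [hlz 1 (by omega)]; omega
    · intro a ha
      have : a = 0 := by omega
      rw [this, hl0]; omega
  have hnpos : (0 : ℤ) < (n : ℤ) := by exact_mod_cast (by omega : 0 < n)
  -- the partition
  have hpart : IsPartition l := by
    constructor
    · intro a
      simp only [hldef]
      split_ifs <;> first | contradiction | omega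
    · exact ⟨P, hlz P (by omega)⟩
  -- l is not A-regular : the corner hook is illegal
  have hnotA : ¬ ARegular n A l := by
    intro h
    apply h
    refine ⟨0, 0, T, hT1, ?_, ?_, ?_⟩
    · rw [hl0]; omega
    · rw [hl0, hconj0, ← hPZ]
      push_cast
      omega
    · rw [hl0]
      push_cast
      omega
  -- l is A'-regular
  have hregA' : ARegular n A' l := by
    rintro ⟨a, c, u, hu, hc, hhook, harm⟩
    have hu' : (1 : ℤ) ≤ (u : ℤ) := by exact_mod_cast hu
    have hbd' := hA'.1 u hu
    rcases Nat.eq_zero_or_pos a with ha0 | ha0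
    · subst ha0
      rw [hl0] at hc hhook harm
      rcases Nat.eq_zero_or_pos c with hc0 | hc0
      · -- corner node: hook length nT, arm A T ≠ A' T
        subst hc0
        rw [hconj0] at hhook
        push_cast at hhook harm
        have hnu : (n : ℤ) * u = (P : ℤ) := by linarith [hr]
        rw [hPZ] at hnu
        have huT' : u = T := by
          have := mul_left_cancel₀ (ne_of_gt hnpos) hnu
          exact_mod_cast this
        subst huT'
        apply hTne
        omega
      · -- row node: forces u = 1, A' 1 = n - 1
        have hcM : c ≤ M := by omega
        rw [hconjc c hc0 hcM] at hhook
        push_cast at hhook harm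
        have key : (n : ℤ) * u = (M : ℤ) + 1 - c := by linarith
        have harm' : A' u = (n : ℤ) * u - 1 := by linarith
        have hub : A' u ≤ ((n : ℤ) - 1) * u := hbd'.2
        have e : ((n : ℤ) - 1) * u = (n : ℤ) * u - u := by ring
        have hu1 : (u : ℤ) ≤ 1 := by linarith
        have hu1' : u = 1 := by omega
        subst hu1'
        push_cast at key harm'
        have key' : (n : ℤ) = (M : ℤ) + 1 - c := by linarith
        have hA'1 : A' 1 = (n : ℤ) - 1 := by linarith
        have hc1 : (1 : ℤ) ≤ (c : ℤ) := by exact_mod_cast hc0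
        have hnM : (n : ℤ) ≤ M := by linarith
        rcases hTkey with hTeq | h11
        · subst hTeq
          have := hbd.2
          push_cast at this
          linarith [hM]
        · have hft := force_top hA' hA'1 T hT1
          have hft2 := force_top hA (h11.trans hA'1) T hT1
          exact hTne (by rw [hft2, hft])
    · rcases Nat.lt_or_ge a r with har | har
      · -- column node: forces u = 1, A' 1 = 0
        rw [hlrow a ha0 har] at hc hhook harm
        have hc0 : c = 0 := by omega
        subst hc0
        rw [hconj0] at hhook
        push_cast at hhook harm
        have harm0 : A' u = 0 := by linarith
        have hlb : (u : ℤ) - 1 ≤ A' u := hbd'.1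
        have hu1' : u = 1 := by
          have : (u : ℤ) ≤ 1 := by linarith
          omega
        subst hu1'
        push_cast at hhook
        have ha1 : (1 : ℤ) ≤ (a : ℤ) := by exact_mod_cast ha0
        have key : (n : ℤ) = (r : ℤ) - a := by linarith
        rcases hTkey with hTeq | h11
        · subst hTeq
          push_cast at hPZ
          linarith [hr, Int.natCast_nonneg M]
        · have hfb := force_bot hA' harm0 T hT1
          have hfb2 := force_bot hA (h11.trans harm0) T hT1
          exact hTne (by rw [hfb2, hfb])
      · rw [hlz a har] at hc
        omega
  exact ⟨l, hpart, fun hiff => hnotA (hiff.mpr hregA')⟩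

end ArmCrystal
end

section
/- Suppose n ≥ 3 and A is an arm sequence. Then the sequence (A_t / t)_{t ≥ 1} converges to some real number y_A ∈ [1, n − 1]. In fact, for all t, u ≥ 1 one has |A_t/t − A_u/u| < 1/min{t, u}. -/
/-!
Evaluating `A` at `t * u` in two ways, by induction from `A (t + u) - A t - A u ∈ {0, 1}`,
pins `u * A t` and `t * A u` inside windows of widths `u - 1` and `t - 1` around `A (t * u)`,
so `|A t / t - A u / u| ≤ (max t u - 1) / (t * u) < 1 / min t u`. Thus `A t / t` is Cauchy,
and the bounds `t - 1 ≤ A t ≤ (n - 1) t` pass to the limit.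
-/

namespace ArmCrystal

theorem cauchySeq_of_abs_sub_lt_one_div_min {s : ℕ → ℝ}
    (hs : ∀ t u : ℕ, 1 ≤ t → 1 ≤ u → |s t - s u| < 1 / (min t u : ℕ)) : CauchySeq s := by
  refine Metric.cauchySeq_iff'.2 fun ε hε => ?_
  obtain ⟨k, hk⟩ := exists_nat_one_div_lt hε
  refine ⟨k + 1, fun t ht => ?_⟩
  calc dist (s t) (s (k + 1)) < 1 / (min t (k + 1) : ℕ) := hs t (k + 1) (by omega) (by omega)
    _ = 1 / ((k : ℝ) + 1) := by rw [min_eq_right ht]; push_cast; rfl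
    _ < ε := hk

section AlmostAdditive

variable {A : ℕ → ℤ}
  (hA : ∀ t u : ℕ, 1 ≤ t → 1 ≤ u → A t + A u ≤ A (t + u) ∧ A (t + u) ≤ A t + A u + 1)
include hA

theorem mul_apply_le_apply_mul_le {t k : ℕ} (ht : 1 ≤ t) (hk : 1 ≤ k) :
    k * A t ≤ A (k * t) ∧ A (k * t) ≤ k * A t + k - 1 := by
  induction k, hk using Nat.le_induction with
  | base => simp
  | succ k hk ih =>
    have hkt : 1 ≤ k * t := Nat.one_le_iff_ne_zero.2 (by positivity)
    rw [Nat.succ_mul]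
    push_cast
    constructor <;> linarith [hA (k * t) t hkt ht]

theorem abs_mul_sub_mul_le {t u : ℕ} (ht : 1 ≤ t) (hu : 1 ≤ u) :
    |u * A t - t * A u| ≤ max t u - 1 := by
  have hut := mul_apply_le_apply_mul_le hA ht hu
  have htu := mul_apply_le_apply_mul_le hA hu ht
  rw [Nat.mul_comm] at htu
  rw [abs_le]
  constructor <;> push_cast <;> linarith [le_max_left (t : ℤ) u, le_max_right (t : ℤ) u]

theorem abs_div_sub_div_lt_one_div_min {t u : ℕ} (ht : 1 ≤ t) (hu : 1 ≤ u) :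
    |(A t : ℝ) / t - (A u : ℝ) / u| < 1 / (min t u : ℕ) := by
  have htR : (0 : ℝ) < t := by exact_mod_cast ht
  have huR : (0 : ℝ) < u := by exact_mod_cast hu
  have hcross : |(u : ℝ) * A t - t * A u| ≤ max (t : ℝ) u - 1 := by
    exact_mod_cast abs_mul_sub_mul_le hA ht hu
  have hprod : (t : ℝ) * u = min (t : ℝ) u * max (t : ℝ) u := (min_mul_max _ _).symm
  have hmin : (0 : ℝ) < min (t : ℝ) u := lt_min htR huR
  calc |(A t : ℝ) / t - (A u : ℝ) / u| = |(u : ℝ) * A t - t * A u| / (t * u) := by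
        rw [div_sub_div _ _ htR.ne' huR.ne', abs_div, abs_of_pos (mul_pos htR huR)]; ring_nf
    _ ≤ (max (t : ℝ) u - 1) / (t * u) := by gcongr
    _ < max (t : ℝ) u / (t * u) := by gcongr; linarith
    _ = 1 / (min t u : ℕ) := by
        rw [hprod, Nat.cast_min]; field_simp [hmin.ne', (hmin.trans_le (min_le_max)).ne']

end AlmostAdditive

namespace IsArmSeq

variable {n : ℕ} {A : ℕ → ℤ}

theorem add_le_and_le_add_one (hA : IsArmSeq n A) {t u : ℕ} (ht : 1 ≤ t) (hu : 1 ≤ u) :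
    A t + A u ≤ A (t + u) ∧ A (t + u) ≤ A t + A u + 1 := by
  rcases hA.2 t u ht hu with h | h <;> omega

theorem div_mem_Icc (hA : IsArmSeq n A) {t : ℕ} (ht : 1 ≤ t) :
    (A t : ℝ) / t ∈ Set.Icc (1 - 1 / (t : ℝ)) ((n : ℝ) - 1) := by
  have htR : (0 : ℝ) < t := by exact_mod_cast ht
  have hlo : (t : ℝ) - 1 ≤ A t := by exact_mod_cast (hA.1 t ht).1
  have hhi : (A t : ℝ) ≤ ((n : ℝ) - 1) * t := by exact_mod_cast (hA.1 t ht).2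
  constructor
  · rw [le_div_iff₀ htR, sub_mul, one_div_mul_cancel htR.ne']; linarith
  · rwa [div_le_iff₀ htR]

end IsArmSeq

theorem arm_sequence_ratio_converges_general (n : ℕ)
    (A : ℕ → ℤ) (hA : IsArmSeq n A) :
    (∃ y : ℝ, y ∈ Set.Icc (1 : ℝ) ((n : ℝ) - 1) ∧
      Filter.Tendsto (fun t : ℕ => (A t : ℝ) / t) Filter.atTop (nhds y)) ∧
    (∀ t u : ℕ, 1 ≤ t → 1 ≤ u →
      |(A t : ℝ) / t - (A u : ℝ) / u| < 1 / (min t u : ℕ)) := by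
  have key : ∀ t u : ℕ, 1 ≤ t → 1 ≤ u →
      |(A t : ℝ) / t - (A u : ℝ) / u| < 1 / (min t u : ℕ) := fun t u ht hu =>
    abs_div_sub_div_lt_one_div_min (fun _ _ => hA.add_le_and_le_add_one) ht hu
  obtain ⟨y, hy⟩ := cauchySeq_tendsto_of_complete (cauchySeq_of_abs_sub_lt_one_div_min key)
  have hbounds := Filter.eventually_atTop.2 ⟨1, fun t ht => hA.div_mem_Icc ht⟩
  have hlower : Filter.Tendsto (fun t : ℕ => 1 - 1 / (t : ℝ)) Filter.atTop (nhds 1) := by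
    simpa using tendsto_one_div_atTop_nhds_zero_nat.const_sub (1 : ℝ)
  refine ⟨⟨y, ⟨?_, ?_⟩, hy⟩, key⟩
  · exact le_of_tendsto_of_tendsto hlower hy (hbounds.mono fun _ h => h.1)
  · exact le_of_tendsto hy (hbounds.mono fun _ h => h.2)

/-- Lemma 6.4 of the paper: for an arm sequence `A`, the sequence `(A t / t)` converges
to some `y_A ∈ [1, n-1]`; indeed it is Cauchy, with
`|A t / t - A u / u| < 1 / min{t, u}` for all `t, u ≥ 1`. -/
theorem arm_sequence_ratio_converges (n : ℕ) (hn : 3 ≤ n)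
    (A : ℕ → ℤ) (hA : IsArmSeq n A) :
    (∃ y : ℝ, y ∈ Set.Icc (1 : ℝ) ((n : ℝ) - 1) ∧
      Filter.Tendsto (fun t : ℕ => (A t : ℝ) / t) Filter.atTop (nhds y)) ∧
    (∀ t u : ℕ, 1 ≤ t → 1 ≤ u →
      |(A t : ℝ) / t - (A u : ℝ) / u| < 1 / (min t u : ℕ)) :=
  arm_sequence_ratio_converges_general n A hA

end ArmCrystal
end

section
/- Fix n ≥ 3 and let y ∈ [1, n − 1]. (1) If y is irrational, then the sequence A^y given by A^y_t = ⌊yt⌋ is an arm sequence, and it is the unique arm sequence A with lim_{t→∞} A_t/t = y. (2) If y is rational, then the two sequences A^{y,+} and A^{y,−} given by A^{y,+}_t = ⌊yt⌋ and A^{y,−}_t = ⌈yt − 1⌉ are arm sequences, and they are the only arm sequences A with lim_{t→∞} A_t/t = y. -/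
/-!
Superadditivity up to one gives `k A_t ≤ A_{kt} ≤ k A_t + k - 1`; dividing by `kt` and letting
`k → ∞` traps every `A_t` of an arm sequence with limit `y` in the strip `[yt - 1, yt]`, so
`A_t ∈ {⌈yt - 1⌉, ⌊yt⌋}`. The same inequality for `t₁ t₂` rules out `A_{t₁} = y t₁` together
with `A_{t₂} = y t₂ - 1`, so `A` takes the upper choice throughout or the lower one throughout.
The two choices differ only where `yt` is an integer, which never happens for irrational `y`.
-/

namespace ArmCrystal

/-- `A` tends to `y`, i.e. `A t / t → y`. -/
def TendsToRatio (A : ℕ → ℤ) (y : ℝ) : Prop :=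
  Filter.Tendsto (fun t : ℕ => (A t : ℝ) / t) Filter.atTop (nhds y)

open Filter

def NearlyAdditive (A : ℕ → ℤ) : Prop :=
  ∀ t u : ℕ, 1 ≤ t → 1 ≤ u → A (t + u) = A t + A u ∨ A (t + u) = A t + A u + 1

def InStrip (y : ℝ) (A : ℕ → ℤ) : Prop :=
  ∀ t : ℕ, 1 ≤ t → y * t - 1 ≤ A t ∧ (A t : ℝ) ≤ y * t

namespace NearlyAdditive

variable {A : ℕ → ℤ}

theorem mul_bounds (hA : NearlyAdditive A) {k t : ℕ} (hk : 1 ≤ k) (ht : 1 ≤ t) :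
    k * A t ≤ A (k * t) ∧ A (k * t) ≤ k * A t + (k - 1) := by
  induction k, hk using Nat.le_induction with
  | base => simp
  | succ k hk ih =>
    rw [Nat.succ_mul]
    rcases hA (k * t) t (Nat.mul_pos hk ht) ht with h | h <;>
    · rw [h]; push_cast; constructor <;> linarith [ih.1, ih.2]

theorem inStrip {y : ℝ} (hA : NearlyAdditive A) (hy : TendsToRatio A y) : InStrip y A := by
  intro t ht
  have htR : (0 : ℝ) < t := by exact_mod_cast ht
  have hsub : Tendsto (fun k : ℕ => (A (k * t) : ℝ) / ((k * t : ℕ) : ℝ)) atTop (nhds y) :=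
    hy.comp (tendsto_id.atTop_mul_const' ht)
  have hlow : (A t : ℝ) / t ≤ y := by
    refine ge_of_tendsto hsub ?_
    filter_upwards [eventually_ge_atTop 1] with k hk
    have hkR : (0 : ℝ) < k := by exact_mod_cast hk
    have hmul : (k : ℝ) * A t ≤ A (k * t) := by exact_mod_cast (hA.mul_bounds hk ht).1
    rw [Nat.cast_mul, div_le_div_iff₀ htR (by positivity)]
    nlinarith
  have hhigh : y ≤ ((A t : ℝ) + 1) / t := by
    refine le_of_tendsto hsub ?_
    filter_upwards [eventually_ge_atTop 1] with k hk
    have hkR : (0 : ℝ) < k := by exact_mod_cast hk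
    have hmul : (A (k * t) : ℝ) ≤ k * A t + (k - 1) := by exact_mod_cast (hA.mul_bounds hk ht).2
    rw [Nat.cast_mul, div_le_div_iff₀ (by positivity) htR]
    nlinarith
  rw [div_le_iff₀ htR] at hlow
  rw [le_div_iff₀ htR] at hhigh
  constructor <;> linarith

theorem not_eq_and_eq_sub_one (hA : NearlyAdditive A) {y : ℝ} {t₁ t₂ : ℕ}
    (ht₁ : 1 ≤ t₁) (ht₂ : 1 ≤ t₂) (h₁ : (A t₁ : ℝ) = y * t₁) (h₂ : (A t₂ : ℝ) = y * t₂ - 1) :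
    False := by
  have hlow : (t₂ : ℝ) * A t₁ ≤ A (t₂ * t₁) := by exact_mod_cast (hA.mul_bounds ht₂ ht₁).1
  have hhigh : (A (t₁ * t₂) : ℝ) ≤ t₁ * A t₂ + (t₁ - 1) := by
    exact_mod_cast (hA.mul_bounds ht₁ ht₂).2
  rw [Nat.mul_comm, h₁] at hlow
  rw [h₂] at hhigh
  nlinarith

theorem forall_eq_floor_or_forall_eq_ceil_sub_one (hA : NearlyAdditive A) {y : ℝ}
    (hstrip : InStrip y A) :
    (∀ t : ℕ, 1 ≤ t → A t = ⌊y * t⌋) ∨ (∀ t : ℕ, 1 ≤ t → A t = ⌈y * t - 1⌉) := by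
  refine or_iff_not_imp_left.mpr fun hfloor => ?_
  push Not at hfloor
  obtain ⟨t₂, ht₂, hne⟩ := hfloor
  have hdeficient : (A t₂ : ℝ) = y * t₂ - 1 := by
    have hlt : (A t₂ : ℝ) + 1 ≤ y * t₂ := by
      by_contra! h
      exact hne ((Int.floor_eq_iff.mpr ⟨(hstrip t₂ ht₂).2, h⟩).symm)
    linarith [(hstrip t₂ ht₂).1]
  intro t ht
  obtain ⟨hlow, hhigh⟩ := hstrip t ht
  have hlt : (A t : ℝ) < y * t :=
    hhigh.lt_of_ne fun h => hA.not_eq_and_eq_sub_one ht ht₂ h hdeficient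
  exact (Int.ceil_eq_iff.mpr ⟨by linarith, hlow⟩).symm

end NearlyAdditive

theorem nearlyAdditive_floor (y : ℝ) : NearlyAdditive fun t : ℕ => ⌊y * t⌋ := by
  intro t u _ _
  have hlow := Int.le_floor_add (y * t) (y * u)
  have hhigh := Int.le_floor_add_floor (y * t) (y * u)
  simp only [Nat.cast_add, mul_add]
  omega

theorem nearlyAdditive_ceil_sub_one (y : ℝ) : NearlyAdditive fun t : ℕ => ⌈y * t - 1⌉ := by
  intro t u _ _
  have hlow := Int.ceil_add_ceil_le (y * t) (y * u)
  have hhigh := Int.ceil_add_le (y * t) (y * u)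
  simp only [Nat.cast_add, mul_add, Int.ceil_sub_one]
  omega

theorem inStrip_floor (y : ℝ) : InStrip y fun t : ℕ => ⌊y * t⌋ :=
  fun _ _ => ⟨(Int.sub_one_lt_floor _).le, Int.floor_le _⟩

theorem inStrip_ceil_sub_one (y : ℝ) : InStrip y fun t : ℕ => ⌈y * t - 1⌉ :=
  fun t _ => ⟨Int.le_ceil _, by linarith [Int.ceil_lt_add_one (y * t - 1)]⟩

namespace InStrip

variable {y : ℝ} {A : ℕ → ℤ}

theorem tendsToRatio (hA : InStrip y A) : TendsToRatio A y := by
  have hlim : Tendsto (fun t : ℕ => y - 1 / (t : ℝ)) atTop (nhds y) := by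
    simpa using tendsto_const_nhds.sub (tendsto_one_div_atTop_nhds_zero_nat (𝕜 := ℝ))
  refine tendsto_of_tendsto_of_tendsto_of_le_of_le' hlim tendsto_const_nhds ?_ ?_ <;>
    filter_upwards [eventually_ge_atTop 1] with t ht
  · rw [sub_le_iff_le_add, ← add_div, le_div_iff₀ (by exact_mod_cast ht)]
    linarith [(hA t ht).1]
  · rw [div_le_iff₀ (by exact_mod_cast ht)]
    exact (hA t ht).2

theorem isArmSeq {n : ℕ} (hy : y ∈ Set.Icc (1 : ℝ) ((n : ℝ) - 1)) (hA : InStrip y A)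
    (hadd : NearlyAdditive A) : IsArmSeq n A := by
  refine ⟨fun t ht => ?_, hadd⟩
  have htR : (0 : ℝ) < t := by exact_mod_cast ht
  obtain ⟨hlow, hhigh⟩ := hA t ht
  have h₁ : (((t : ℤ) - 1 : ℤ) : ℝ) ≤ A t := by push_cast; nlinarith [hy.1]
  have h₂ : (A t : ℝ) ≤ (((n - 1) * t : ℤ) : ℝ) := by push_cast; nlinarith [hy.2]
  exact ⟨by exact_mod_cast h₁, by exact_mod_cast h₂⟩

end InStrip

theorem ceil_sub_one_eq_floor_of_irrational {x : ℝ} (hx : Irrational x) : ⌈x - 1⌉ = ⌊x⌋ := by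
  have hceil := (Int.ceil_eq_floor_add_one_iff_notMem x).mpr fun ⟨m, hm⟩ => hx.ne_int m hm.symm
  rw [Int.ceil_sub_one, hceil, add_sub_cancel_right]

theorem arm_sequences_with_given_limit_general (n : ℕ)
    (y : ℝ) (hy : y ∈ Set.Icc (1 : ℝ) ((n : ℝ) - 1)) :
    (Irrational y →
      IsArmSeq n (fun t : ℕ => ⌊y * t⌋) ∧
      TendsToRatio (fun t : ℕ => ⌊y * t⌋) y ∧
      (∀ A : ℕ → ℤ, IsArmSeq n A → TendsToRatio A y →
        ∀ t : ℕ, 1 ≤ t → A t = ⌊y * t⌋)) ∧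
    (¬ Irrational y →
      IsArmSeq n (fun t : ℕ => ⌊y * t⌋) ∧
      IsArmSeq n (fun t : ℕ => ⌈y * t - 1⌉) ∧
      TendsToRatio (fun t : ℕ => ⌊y * t⌋) y ∧
      TendsToRatio (fun t : ℕ => ⌈y * t - 1⌉) y ∧
      (∀ A : ℕ → ℤ, IsArmSeq n A → TendsToRatio A y →
        (∀ t : ℕ, 1 ≤ t → A t = ⌊y * t⌋) ∨ (∀ t : ℕ, 1 ≤ t → A t = ⌈y * t - 1⌉))) := by
  have hfloor := (inStrip_floor y).isArmSeq hy (nearlyAdditive_floor y)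
  have hceil := (inStrip_ceil_sub_one y).isArmSeq hy (nearlyAdditive_ceil_sub_one y)
  have hdichotomy : ∀ A : ℕ → ℤ, IsArmSeq n A → TendsToRatio A y →
      (∀ t : ℕ, 1 ≤ t → A t = ⌊y * t⌋) ∨ (∀ t : ℕ, 1 ≤ t → A t = ⌈y * t - 1⌉) :=
    fun A hA hAy =>
      NearlyAdditive.forall_eq_floor_or_forall_eq_ceil_sub_one hA.2
        (NearlyAdditive.inStrip hA.2 hAy)
  refine ⟨fun hirr => ⟨hfloor, (inStrip_floor y).tendsToRatio, fun A hA hAy t ht => ?_⟩,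
    fun _ => ⟨hfloor, hceil, (inStrip_floor y).tendsToRatio,
      (inStrip_ceil_sub_one y).tendsToRatio, hdichotomy⟩⟩
  rcases hdichotomy A hA hAy with h | h
  · exact h t ht
  · rw [h t ht, ceil_sub_one_eq_floor_of_irrational (hirr.mul_natCast (by omega))]

/-- Lemma 6.5 of the paper: for `y ∈ [1, n-1]`: (1) if `y` is irrational, the sequence
`A^y : t ↦ ⌊y t⌋` is an arm sequence, and it is the unique arm sequence tending to `y`;
(2) if `y` is rational, the sequences `A^{y,+} : t ↦ ⌊y t⌋` and `A^{y,-} : t ↦ ⌈y t - 1⌉`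
are arm sequences, and they are the only arm sequences tending to `y`. -/
theorem arm_sequences_with_given_limit (n : ℕ) (hn : 3 ≤ n)
    (y : ℝ) (hy : y ∈ Set.Icc (1 : ℝ) ((n : ℝ) - 1)) :
    (Irrational y →
      IsArmSeq n (fun t : ℕ => ⌊y * t⌋) ∧
      TendsToRatio (fun t : ℕ => ⌊y * t⌋) y ∧
      (∀ A : ℕ → ℤ, IsArmSeq n A → TendsToRatio A y →
        ∀ t : ℕ, 1 ≤ t → A t = ⌊y * t⌋)) ∧
    (¬ Irrational y →
      IsArmSeq n (fun t : ℕ => ⌊y * t⌋) ∧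
      IsArmSeq n (fun t : ℕ => ⌈y * t - 1⌉) ∧
      TendsToRatio (fun t : ℕ => ⌊y * t⌋) y ∧
      TendsToRatio (fun t : ℕ => ⌈y * t - 1⌉) y ∧
      (∀ A : ℕ → ℤ, IsArmSeq n A → TendsToRatio A y →
        (∀ t : ℕ, 1 ≤ t → A t = ⌊y * t⌋) ∨ (∀ t : ℕ, 1 ≤ t → A t = ⌈y * t - 1⌉))) :=
  arm_sequences_with_given_limit_general n y hy

end ArmCrystal
end
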